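/- arXiv:0908.4171 — 7 statements merged into one kernel-verified Lean document; each statement's English description precedes it below -/
import Mathlib

section
/- Let A be a nonzero d1×d2 matrix with nonnegative entries satisfying hypothesis (H), and let B be a d2×d3 matrix with nonnegative entries such that AB ≠ 0. Then δ(AB) ≤ δ(A)·τ(B). -/
open Matrix Filter Finset Topology
open scoped ENNReal Classical

/-- Hypothesis (H): the nonzero entries of `A` form a nonempty rectangular block
`I_A × J_A`. -/
def satH {d1 d2 : ℕ} (A : Matrix (Fin d1) (Fin d2) ℝ) : Prop :=
  ∃ (I : Set (Fin d1)) (J : Set (Fin d2)), I.Nonempty ∧ J.Nonempty ∧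
    ∀ i j, A i j ≠ 0 ↔ i ∈ I ∧ j ∈ J

/-- The δ-coefficient of a matrix: `sup` of `log((A i j · A k l)/(A k j · A i l))` over
indices in the nonzero block if (H) holds, `+∞` otherwise. -/
noncomputable def deltaC {d1 d2 : ℕ} (A : Matrix (Fin d1) (Fin d2) ℝ) : ℝ≥0∞ :=
  if satH A then
    ENNReal.ofReal (sSup {x | ∃ i k j l, A i j ≠ 0 ∧ A k j ≠ 0 ∧ A i l ≠ 0 ∧ A k l ≠ 0 ∧
      x = Real.log (A i j * A k l / (A k j * A i l))})
  else ⊤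

/-- The generalized contraction coefficient `τ(A) = tanh(δ(A)/4)`, equal to `1`
when `δ(A) = +∞`. -/
noncomputable def tauC {d1 d2 : ℕ} (A : Matrix (Fin d1) (Fin d2) ℝ) : ℝ :=
  if deltaC A = ⊤ then 1 else Real.tanh ((deltaC A).toReal / 4)

/-!
Write `(AB) i a = ∑ j, A i j * B j a`. The cross-ratio bound
`A i j * A k l ≤ exp δ(A) * (A k j * A i l)` passes term by term to `AB`, which settles the case
`τ(B) = 1`. Otherwise fix rows `i, k` and columns `a, b` and put `r j = A i j / A k j`,
`p j = A k j * B j a`, `q j = A k j * B j b`: the `r j` lie in an interval `[m, exp δ(A) * m]`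
and the ratios `q j / p j` within a factor `exp δ(B)` of each other. The cross ratio to bound is
`(∑ r p) (∑ q) / ((∑ p) (∑ r q))`; the inequality is linear in `r`, so `r` may be taken
two-valued, which leaves a quadratic form in two variables whose sharp constant is
`(cosh (u + w) / cosh (u - w))²` with `u = δ(B) / 4`, `w = δ(A) / 4`. As `(log cosh)' = tanh` and
`tanh (u + x) + tanh (u - x) ≤ 2 tanh u`, this is at most `exp (4 w tanh u) = exp (δ(A) τ(B))`.
-/

namespace Real

lemma tanh_nonneg {u : ℝ} (hu : 0 ≤ u) : 0 ≤ tanh u := by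
  rw [tanh_eq_sinh_div_cosh]
  exact div_nonneg (sinh_nonneg_iff.2 hu) (cosh_pos u).le

lemma tanh_add_add_tanh_sub_le {u : ℝ} (hu : 0 ≤ u) (x : ℝ) :
    tanh (u + x) + tanh (u - x) ≤ 2 * tanh u := by
  have hsum : tanh (u + x) + tanh (u - x) = sinh (2 * u) / (cosh (u + x) * cosh (u - x)) := by
    rw [tanh_eq_sinh_div_cosh, tanh_eq_sinh_div_cosh,
      div_add_div _ _ (cosh_pos _).ne' (cosh_pos _).ne', ← sinh_add, add_add_sub_cancel, two_mul]
  have htwo : 2 * tanh u = sinh (2 * u) / cosh u ^ 2 := by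
    rw [tanh_eq_sinh_div_cosh, sinh_two_mul]
    field_simp
  have hden : cosh u ^ 2 ≤ cosh (u + x) * cosh (u - x) := by
    rw [cosh_add, cosh_sub]
    nlinarith [cosh_sq u, cosh_sq x, sq_nonneg (sinh x)]
  rw [hsum, htwo]
  gcongr

lemma cosh_add_le_exp_mul_cosh_sub {u w : ℝ} (hu : 0 ≤ u) (hw : 0 ≤ w) :
    cosh (u + w) ≤ exp (2 * w * tanh u) * cosh (u - w) := by
  set F : ℝ → ℝ := fun x => 2 * x * tanh u + log (cosh (u - x)) - log (cosh (u + x))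
  have hF : ∀ x, HasDerivAt F (2 * tanh u - tanh (u - x) - tanh (u + x)) x := by
    intro x
    have hsub := ((hasDerivAt_cosh (u - x)).comp x ((hasDerivAt_id x).const_sub u)).log
      (cosh_pos _).ne'
    have hadd := ((hasDerivAt_cosh (u + x)).comp x ((hasDerivAt_id x).const_add u)).log
      (cosh_pos _).ne'
    refine ((((hasDerivAt_id x).const_mul 2).mul_const (tanh u)).add hsub |>.sub hadd)
      |>.congr_deriv ?_
    simp only [tanh_eq_sinh_div_cosh, Function.comp_apply]
    ring
  have hmono : Monotone F := monotone_of_deriv_nonneg (fun x => (hF x).differentiableAt)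
    fun x => by rw [(hF x).deriv]; linarith [tanh_add_add_tanh_sub_le hu x]
  have h : F 0 ≤ F w := hmono hw
  simp only [F, mul_zero, zero_mul, sub_zero, add_zero, zero_add, sub_self] at h
  rw [← log_le_log_iff (cosh_pos _) (by positivity), log_mul (exp_pos _).ne' (cosh_pos _).ne',
    log_exp]
  linarith

lemma exp_mul_exp_add_one_sq_le {u w : ℝ} (hu : 0 ≤ u) (hw : 0 ≤ w) :
    (exp (2 * w) * exp (2 * u) + 1) ^ 2 ≤
      exp (4 * w * tanh u) * (exp (2 * w) + exp (2 * u)) ^ 2 := by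
  have hnum : exp (2 * w) * exp (2 * u) + 1 = 2 * exp (u + w) * cosh (u + w) := by
    rw [cosh_eq, exp_neg, two_mul, two_mul]
    simp only [exp_add]
    field_simp
  have hden : exp (2 * w) + exp (2 * u) = 2 * exp (u + w) * cosh (u - w) := by
    rw [cosh_eq, exp_neg, two_mul, two_mul]
    simp only [exp_add, exp_sub]
    field_simp
    ring
  have hexp : exp (4 * w * tanh u) = exp (2 * w * tanh u) ^ 2 := by
    rw [← exp_nat_mul]; ring_nf
  rw [hnum, hden, hexp, ← mul_pow]
  refine pow_le_pow_left₀ (by positivity) ?_ 2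
  calc 2 * exp (u + w) * cosh (u + w)
      ≤ 2 * exp (u + w) * (exp (2 * w * tanh u) * cosh (u - w)) := by
        gcongr; exact cosh_add_le_exp_mul_cosh_sub hu hw
    _ = _ := by ring

end Real

lemma add_mul_add_le_of_mul_le {α β K x y u v : ℝ} (hα : 1 ≤ α) (hβ : 0 < β) (hK : 1 ≤ K)
    (hαβK : (α * β + 1) ^ 2 ≤ K * (α + β) ^ 2)
    (hx : 0 ≤ x) (hy : 0 ≤ y) (hu : 0 ≤ u) (hv : 0 ≤ v) (hxv : x * v ≤ β ^ 2 * (y * u)) :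
    (α ^ 2 * x + y) * (u + v) ≤ K * ((x + y) * (α ^ 2 * u + v)) := by
  rcases (add_nonneg (mul_nonneg (sq_nonneg β) hu) hv).eq_or_lt with h0 | hpos
  · obtain ⟨rfl, rfl⟩ : u = 0 ∧ v = 0 := by
      constructor <;> nlinarith [sq_pos_of_pos hβ]
    simp
  have hmono : (α ^ 2 * x + y) * (β ^ 2 * u + v) ≤ (α ^ 2 * β ^ 2 * u + v) * (x + y) := by
    nlinarith [mul_nonneg (by nlinarith : 0 ≤ α ^ 2 - 1) (sub_nonneg.2 hxv)]
  have hquad : (α ^ 2 * β ^ 2 * u + v) * (u + v) ≤ K * ((β ^ 2 * u + v) * (α ^ 2 * u + v)) := by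
    have hsos : K * ((β ^ 2 * u + v) * (α ^ 2 * u + v)) - (α ^ 2 * β ^ 2 * u + v) * (u + v) =
        (K - 1) * (α * β * u - v) ^ 2 + u * v * (K * (α + β) ^ 2 - (α * β + 1) ^ 2) := by
      ring
    rw [← sub_nonneg, hsos]
    exact add_nonneg (mul_nonneg (sub_nonneg.2 hK) (sq_nonneg _))
      (mul_nonneg (mul_nonneg hu hv) (sub_nonneg.2 hαβK))
  refine le_of_mul_le_mul_right ?_ hpos
  linarith [mul_le_mul_of_nonneg_right hmono (add_nonneg hu hv),
    mul_le_mul_of_nonneg_right hquad (add_nonneg hx hy)]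

lemma sum_mul_sum_le_sum_mul_sum {ι : Type*} {s t : Finset ι} {p q : ι → ℝ} {c : ℝ}
    (h : ∀ j ∈ s, ∀ l ∈ t, p j * q l ≤ c * (p l * q j)) :
    (∑ j ∈ s, p j) * ∑ l ∈ t, q l ≤ c * ((∑ l ∈ t, p l) * ∑ j ∈ s, q j) := by
  rw [sum_mul_sum, sum_mul_sum, sum_comm (s := t), mul_sum]
  exact sum_le_sum fun j hj => by rw [mul_sum]; exact sum_le_sum fun l hl => h j hj l hl

lemma sum_mul_sum_le_of_mul_le {ι : Type*} (s : Finset ι) {a b u v : ι → ℝ} {c : ℝ}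
    (hu : ∀ j ∈ s, 0 ≤ u j) (hv : ∀ j ∈ s, 0 ≤ v j)
    (hab : ∀ j ∈ s, ∀ l ∈ s, a j * b l ≤ c * (b j * a l)) :
    (∑ j ∈ s, a j * u j) * ∑ j ∈ s, b j * v j ≤
      c * ((∑ j ∈ s, b j * u j) * ∑ j ∈ s, a j * v j) := by
  rw [sum_mul_sum, sum_mul_sum, mul_sum]
  refine sum_le_sum fun j hj => ?_
  rw [mul_sum]
  refine sum_le_sum fun l hl => ?_
  linarith [mul_le_mul_of_nonneg_right (hab j hj l hl) (mul_nonneg (hu j hj) (hv l hl))]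

lemma sum_mul_sum_le_of_mem_Icc {ι : Type*} (s : Finset ι) {r p q : ι → ℝ} {α β K m : ℝ}
    (hα : 1 ≤ α) (hβ : 0 < β) (hK : 1 ≤ K) (hαβK : (α * β + 1) ^ 2 ≤ K * (α + β) ^ 2)
    (hm : 0 ≤ m) (hr : ∀ j ∈ s, r j ∈ Set.Icc m (α ^ 2 * m))
    (hp : ∀ j ∈ s, 0 ≤ p j) (hq : ∀ j ∈ s, 0 ≤ q j)
    (hpq : ∀ j ∈ s, ∀ l ∈ s, p j * q l ≤ β ^ 2 * (p l * q j)) :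
    (∑ j ∈ s, r j * p j) * ∑ j ∈ s, q j ≤ K * ((∑ j ∈ s, p j) * ∑ j ∈ s, r j * q j) := by
  set P := ∑ j ∈ s, p j
  set Q := ∑ j ∈ s, q j
  set c : ι → ℝ := fun j => K * P * q j - Q * p j
  -- The claim reads `0 ≤ ∑ r j * c j`, and `r j * c j` is smallest at an endpoint of `[m, α²m]`.
  have hlin : K * (P * ∑ j ∈ s, r j * q j) - (∑ j ∈ s, r j * p j) * Q =
      ∑ j ∈ s, r j * c j := by
    simp only [c, mul_sub, sum_sub_distrib, mul_sum, sum_mul]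
    congr 1 <;> exact sum_congr rfl fun j _ => by ring
  have hvert : ∀ j ∈ s, (if c j < 0 then α ^ 2 * m * c j else m * c j) ≤ r j * c j := by
    intro j hj
    obtain ⟨hmr, hrM⟩ := hr j hj
    split_ifs with hc <;> nlinarith
  have hsum := sum_le_sum hvert
  rw [sum_ite, ← mul_sum, ← mul_sum] at hsum
  set N := s.filter (fun j => c j < 0)
  set N' := s.filter (fun j => ¬ c j < 0)
  have hP : P = (∑ j ∈ N, p j) + ∑ j ∈ N', p j := (sum_filter_add_sum_filter_not s _ p).symm
  have hQ : Q = (∑ j ∈ N, q j) + ∑ j ∈ N', q j := (sum_filter_add_sum_filter_not s _ q).symm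
  have hcN : ∑ j ∈ N, c j = K * P * ∑ j ∈ N, q j - Q * ∑ j ∈ N, p j := by
    simp only [c, sum_sub_distrib, mul_sum]
  have hcN' : ∑ j ∈ N', c j = K * P * ∑ j ∈ N', q j - Q * ∑ j ∈ N', p j := by
    simp only [c, sum_sub_distrib, mul_sum]
  have hblock := add_mul_add_le_of_mul_le (x := ∑ j ∈ N, p j) (y := ∑ j ∈ N', p j)
    (u := ∑ j ∈ N, q j) (v := ∑ j ∈ N', q j) hα hβ hK hαβK
    (sum_nonneg fun j hj => hp j (mem_filter.1 hj).1)
    (sum_nonneg fun j hj => hp j (mem_filter.1 hj).1)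
    (sum_nonneg fun j hj => hq j (mem_filter.1 hj).1)
    (sum_nonneg fun j hj => hq j (mem_filter.1 hj).1)
    (sum_mul_sum_le_sum_mul_sum fun j hj l hl => hpq j (mem_filter.1 hj).1 l (mem_filter.1 hl).1)
  rw [← hP, ← hQ] at hblock
  rw [hcN, hcN'] at hsum
  linarith [mul_le_mul_of_nonneg_left hblock hm]

lemma sum_mul_sum_le_of_mul_le_sq {ι : Type*} (s : Finset ι) {a b u v : ι → ℝ} {α β K : ℝ}
    (hα : 1 ≤ α) (hβ : 0 < β) (hK : 1 ≤ K) (hαβK : (α * β + 1) ^ 2 ≤ K * (α + β) ^ 2)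
    (ha : ∀ j ∈ s, 0 ≤ a j) (hb : ∀ j ∈ s, 0 ≤ b j)
    (hu : ∀ j ∈ s, 0 ≤ u j) (hv : ∀ j ∈ s, 0 ≤ v j)
    (hab : ∀ j ∈ s, ∀ l ∈ s, a j * b l ≤ α ^ 2 * (b j * a l))
    (huv : ∀ j ∈ s, ∀ l ∈ s, u j * v l ≤ β ^ 2 * (u l * v j)) :
    (∑ j ∈ s, a j * u j) * ∑ j ∈ s, b j * v j ≤
      K * ((∑ j ∈ s, b j * u j) * ∑ j ∈ s, a j * v j) := by
  set s' := s.filter (fun j => b j ≠ 0)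
  rcases s'.eq_empty_or_nonempty with hs' | hs'
  · have hbv : ∑ j ∈ s, b j * v j = 0 := sum_eq_zero fun j hj => by
      by_contra h
      exact (eq_empty_iff_forall_notMem.1 hs' j) (mem_filter.2 ⟨hj, left_ne_zero_of_mul h⟩)
    rw [hbv, mul_zero]
    exact mul_nonneg (by linarith) (mul_nonneg
      (sum_nonneg fun j hj => mul_nonneg (hb j hj) (hu j hj))
      (sum_nonneg fun j hj => mul_nonneg (ha j hj) (hv j hj)))
  -- Indices with `b j = 0` contribute nothing, and on the others `a j / b j` is a true ratio.
  obtain ⟨j₀, hj₀, hmin⟩ := s'.exists_min_image (fun j => a j / b j) hs'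
  obtain ⟨hj₀s, hbj₀⟩ := mem_filter.1 hj₀
  have hbj₀pos : 0 < b j₀ := (hb j₀ hj₀s).lt_of_ne' hbj₀
  have ha_of_b : ∀ j ∈ s, a j ≠ 0 → b j ≠ 0 := fun j hj haj hbj => by
    have := hab j hj j₀ hj₀s
    rw [hbj, zero_mul, mul_zero] at this
    exact haj (le_antisymm (nonpos_of_mul_nonpos_left this hbj₀pos) (ha j hj))
  have hsum_b : ∀ f : ι → ℝ, ∑ j ∈ s', b j * f j = ∑ j ∈ s, b j * f j := fun f =>
    sum_filter_of_ne fun j _ h => left_ne_zero_of_mul h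
  have hsum_a : ∀ f : ι → ℝ, ∑ j ∈ s', a j / b j * (b j * f j) = ∑ j ∈ s, a j * f j := by
    intro f
    rw [← sum_filter_of_ne fun j hj h => ha_of_b j hj (left_ne_zero_of_mul h)]
    exact sum_congr rfl fun j hj => by field_simp [(mem_filter.1 hj).2]
  rw [← hsum_a, ← hsum_a, ← hsum_b, ← hsum_b]
  refine sum_mul_sum_le_of_mem_Icc s' (r := fun j => a j / b j) (m := a j₀ / b j₀) hα hβ hK hαβK
    (div_nonneg (ha j₀ hj₀s) hbj₀pos.le) (fun j hj => ⟨hmin j hj, ?_⟩)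
    (fun j hj => mul_nonneg (hb j (mem_filter.1 hj).1) (hu j (mem_filter.1 hj).1))
    (fun j hj => mul_nonneg (hb j (mem_filter.1 hj).1) (hv j (mem_filter.1 hj).1))
    (fun j hj l hl => ?_)
  · obtain ⟨hjs, hbj⟩ := mem_filter.1 hj
    rw [← mul_div_assoc, div_le_div_iff₀ ((hb j hjs).lt_of_ne' hbj) hbj₀pos]
    linarith [hab j hjs j₀ hj₀s]
  · have hjs := (mem_filter.1 hj).1
    have hls := (mem_filter.1 hl).1
    linarith [mul_le_mul_of_nonneg_left (huv j hjs l hls) (mul_nonneg (hb j hjs) (hb l hls))]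

open Real in
lemma sum_mul_sum_le_exp_mul_tanh {ι : Type*} (s : Finset ι) {a b u v : ι → ℝ} {D Δ : ℝ}
    (hD : 0 ≤ D) (hΔ : 0 ≤ Δ) (ha : ∀ j ∈ s, 0 ≤ a j) (hb : ∀ j ∈ s, 0 ≤ b j)
    (hu : ∀ j ∈ s, 0 ≤ u j) (hv : ∀ j ∈ s, 0 ≤ v j)
    (hab : ∀ j ∈ s, ∀ l ∈ s, a j * b l ≤ exp D * (b j * a l))
    (huv : ∀ j ∈ s, ∀ l ∈ s, u j * v l ≤ exp Δ * (u l * v j)) :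
    (∑ j ∈ s, a j * u j) * ∑ j ∈ s, b j * v j ≤
      exp (D * tanh (Δ / 4)) * ((∑ j ∈ s, b j * u j) * ∑ j ∈ s, a j * v j) := by
  have hexp_sq : ∀ x : ℝ, exp (x / 2) ^ 2 = exp x := fun x => by rw [sq, ← exp_add, add_halves]
  have hcoef := exp_mul_exp_add_one_sq_le (u := Δ / 4) (w := D / 4) (by positivity) (by positivity)
  rw [show 2 * (D / 4) = D / 2 by ring, show 2 * (Δ / 4) = Δ / 2 by ring,
    show 4 * (D / 4) = D by ring] at hcoef
  exact sum_mul_sum_le_of_mul_le_sq s (one_le_exp (by positivity)) (exp_pos _)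
    (one_le_exp (mul_nonneg hD (tanh_nonneg (by positivity)))) hcoef ha hb hu hv
    (by simpa only [hexp_sq] using hab) (by simpa only [hexp_sq] using huv)

section CrossRatios

variable {d1 d2 : ℕ}

def logCrossRatios (A : Matrix (Fin d1) (Fin d2) ℝ) : Set ℝ :=
  {x | ∃ i k j l, A i j ≠ 0 ∧ A k j ≠ 0 ∧ A i l ≠ 0 ∧ A k l ≠ 0 ∧
    x = Real.log (A i j * A k l / (A k j * A i l))}

lemma deltaC_of_satH {A : Matrix (Fin d1) (Fin d2) ℝ} (h : satH A) :
    deltaC A = ENNReal.ofReal (sSup (logCrossRatios A)) :=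
  if_pos h

lemma tauC_of_satH {A : Matrix (Fin d1) (Fin d2) ℝ} (h : satH A)
    (h0 : 0 ≤ sSup (logCrossRatios A)) :
    tauC A = Real.tanh (sSup (logCrossRatios A) / 4) := by
  rw [tauC, deltaC_of_satH h, if_neg ENNReal.ofReal_ne_top, ENNReal.toReal_ofReal h0]

lemma tauC_of_not_satH {A : Matrix (Fin d1) (Fin d2) ℝ} (h : ¬ satH A) : tauC A = 1 := by
  rw [tauC, deltaC, if_neg h, if_pos rfl]

lemma bddAbove_logCrossRatios (A : Matrix (Fin d1) (Fin d2) ℝ) :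
    BddAbove (logCrossRatios A) := by
  refine (Set.finite_range fun x : Fin d1 × Fin d1 × Fin d2 × Fin d2 =>
    Real.log (A x.1 x.2.2.1 * A x.2.1 x.2.2.2 / (A x.2.1 x.2.2.1 * A x.1 x.2.2.2))).bddAbove.mono ?_
  rintro _ ⟨i, k, j, l, -, -, -, -, rfl⟩
  exact ⟨(i, k, j, l), rfl⟩

lemma sSup_logCrossRatios_nonneg {A : Matrix (Fin d1) (Fin d2) ℝ} (h : satH A) :
    0 ≤ sSup (logCrossRatios A) := by
  obtain ⟨I, J, ⟨i, hi⟩, ⟨j, hj⟩, hIJ⟩ := h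
  have hij := (hIJ i j).2 ⟨hi, hj⟩
  refine le_csSup (bddAbove_logCrossRatios A) ⟨i, i, j, j, hij, hij, hij, hij, ?_⟩
  rw [div_self (mul_ne_zero hij hij), Real.log_one]

lemma mul_le_exp_sSup_logCrossRatios_mul {A : Matrix (Fin d1) (Fin d2) ℝ}
    (hA : ∀ i j, 0 ≤ A i j) (h : satH A) (i k : Fin d1) (j l : Fin d2) :
    A i j * A k l ≤ Real.exp (sSup (logCrossRatios A)) * (A k j * A i l) := by
  obtain ⟨I, J, -, -, hIJ⟩ := h
  by_cases hN : A i j * A k l = 0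
  · rw [hN]
    exact mul_nonneg (Real.exp_pos _).le (mul_nonneg (hA k j) (hA i l))
  obtain ⟨hij, hkl⟩ := mul_ne_zero_iff.1 hN
  have hkj := (hIJ k j).2 ⟨((hIJ k l).1 hkl).1, ((hIJ i j).1 hij).2⟩
  have hil := (hIJ i l).2 ⟨((hIJ i j).1 hij).1, ((hIJ k l).1 hkl).2⟩
  have hD : 0 < A k j * A i l := mul_pos ((hA k j).lt_of_ne' hkj) ((hA i l).lt_of_ne' hil)
  have hle := le_csSup (bddAbove_logCrossRatios A) ⟨i, k, j, l, hij, hkj, hil, hkl, rfl⟩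
  rwa [Real.log_le_iff_le_exp (div_pos ((mul_nonneg (hA i j) (hA k l)).lt_of_ne' hN) hD),
    div_le_iff₀ hD] at hle

lemma sSup_logCrossRatios_le {A : Matrix (Fin d1) (Fin d2) ℝ} (hA : ∀ i j, 0 ≤ A i j)
    {D : ℝ} (hD : 0 ≤ D) (h : ∀ i k j l, A i j * A k l ≤ Real.exp D * (A k j * A i l)) :
    sSup (logCrossRatios A) ≤ D := by
  refine Real.sSup_le ?_ hD
  rintro _ ⟨i, k, j, l, hij, hkj, hil, hkl, rfl⟩
  have hD' : 0 < A k j * A i l := mul_pos ((hA k j).lt_of_ne' hkj) ((hA i l).lt_of_ne' hil)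
  have hN : 0 < A i j * A k l := mul_pos ((hA i j).lt_of_ne' hij) ((hA k l).lt_of_ne' hkl)
  rw [Real.log_le_iff_le_exp (div_pos hN hD'), div_le_iff₀ hD']
  exact h i k j l

end CrossRatios

lemma mul_apply_ne_zero_iff {l m n : Type*} [Fintype m] {A : Matrix l m ℝ} {B : Matrix m n ℝ}
    (hA : ∀ i j, 0 ≤ A i j) (hB : ∀ i j, 0 ≤ B i j) (i : l) (k : n) :
    (A * B) i k ≠ 0 ↔ ∃ j, A i j ≠ 0 ∧ B j k ≠ 0 := by
  simp only [mul_apply, ne_eq, sum_eq_zero_iff_of_nonneg fun j _ => mul_nonneg (hA i j) (hB j k),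
    mem_univ, true_implies, not_forall, mul_eq_zero, not_or]

lemma satH_mul {d1 d2 d3 : ℕ} {A : Matrix (Fin d1) (Fin d2) ℝ} {B : Matrix (Fin d2) (Fin d3) ℝ}
    (hA : ∀ i j, 0 ≤ A i j) (hB : ∀ i j, 0 ≤ B i j) (hH : satH A) (hAB : A * B ≠ 0) :
    satH (A * B) := by
  obtain ⟨I, J, hI, -, hIJ⟩ := hH
  have hmul := mul_apply_ne_zero_iff hA hB
  refine ⟨I, {c | ∃ j ∈ J, B j c ≠ 0}, hI, ?_, fun i c => ?_⟩
  · obtain ⟨i, c, hic⟩ : ∃ i c, (A * B) i c ≠ 0 := by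
      by_contra! h
      exact hAB (Matrix.ext h)
    obtain ⟨j, hij, hjc⟩ := (hmul i c).1 hic
    exact ⟨c, j, ((hIJ i j).1 hij).2, hjc⟩
  · rw [hmul]
    constructor
    · rintro ⟨j, hij, hjc⟩
      exact ⟨((hIJ i j).1 hij).1, j, ((hIJ i j).1 hij).2, hjc⟩
    · rintro ⟨hi, j, hj, hjc⟩
      exact ⟨j, (hIJ i j).2 ⟨hi, hj⟩, hjc⟩

theorem delta_contraction_general {d1 d2 d3 : ℕ}
    (A : Matrix (Fin d1) (Fin d2) ℝ) (B : Matrix (Fin d2) (Fin d3) ℝ)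
    (hA : ∀ i j, 0 ≤ A i j) (hB : ∀ i j, 0 ≤ B i j)
    (hH : satH A) (hABne : A * B ≠ 0) :
    deltaC (A * B) ≤ deltaC A * ENNReal.ofReal (tauC B) := by
  have hAB : ∀ i c, 0 ≤ (A * B) i c := fun i c =>
    (sum_nonneg fun j _ => mul_nonneg (hA i j) (hB j c) : 0 ≤ ∑ j, A i j * B j c)
  have hδA := sSup_logCrossRatios_nonneg hH
  have hcrossA := mul_le_exp_sSup_logCrossRatios_mul hA hH
  rw [deltaC_of_satH (satH_mul hA hB hH hABne), deltaC_of_satH hH]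
  by_cases hHB : satH B
  · have hδB := sSup_logCrossRatios_nonneg hHB
    rw [tauC_of_satH hHB hδB, ← ENNReal.ofReal_mul hδA]
    refine ENNReal.ofReal_le_ofReal (sSup_logCrossRatios_le hAB
      (mul_nonneg hδA (Real.tanh_nonneg (by positivity))) fun i k a b => ?_)
    exact sum_mul_sum_le_exp_mul_tanh univ hδA hδB (fun j _ => hA i j) (fun j _ => hA k j)
      (fun j _ => hB j a) (fun j _ => hB j b) (fun j _ l _ => hcrossA i k j l)
      (fun j _ l _ => mul_le_exp_sSup_logCrossRatios_mul hB hHB j l a b)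
  · rw [tauC_of_not_satH hHB, ENNReal.ofReal_one, mul_one]
    exact ENNReal.ofReal_le_ofReal (sSup_logCrossRatios_le hAB hδA fun i k a b =>
      sum_mul_sum_le_of_mul_le univ (fun j _ => hB j a) (fun j _ => hB j b)
        fun j _ l _ => hcrossA i k j l)

/-- **Lemma 2.6.** If `A` is a nonzero nonnegative matrix satisfying (H) and `B` is a
nonnegative matrix with `A * B ≠ 0`, then `δ(AB) ≤ δ(A)·τ(B)`. -/
theorem delta_contraction {d1 d2 d3 : ℕ}
    (A : Matrix (Fin d1) (Fin d2) ℝ) (B : Matrix (Fin d2) (Fin d3) ℝ)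
    (hA : ∀ i j, 0 ≤ A i j) (hB : ∀ i j, 0 ≤ B i j)
    (hAne : A ≠ 0) (hH : satH A) (hABne : A * B ≠ 0) :
    deltaC (A * B) ≤ deltaC A * ENNReal.ofReal (tauC B) :=
  delta_contraction_general A B hA hB hH hABne
end

section
/- Let ∅ ≠ I ⊆ {1,…,d} and let S_I := {X ∈ S_d : I(X) = I}. Then: (i) for X, Y ∈ S_d, δ(X,Y) < +∞ if and only if Δ(X) = Δ(Y); (ii) the restriction of δ to S_I × S_I is a metric on S_I (finite, symmetric, satisfying the triangle inequality, and vanishing exactly on the diagonal); (iii) for all X, Y ∈ S_I, (1/d)·‖X − Y‖ ≤ δ(X,Y) ≤ ‖X − Y‖ / min_{i ∈ I} min(X(i), Y(i)). -/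
open Matrix Filter Finset Topology
open scoped ENNReal Classical

/-- ℓ¹-norm (sum of absolute values of the entries) of a vector. -/
noncomputable def l1 {d : ℕ} (v : Fin d → ℝ) : ℝ := ∑ i, |v i|

/-- Probability vector: nonnegative entries summing to `1`. -/
def probVec {d : ℕ} (X : Fin d → ℝ) : Prop := (∀ i, 0 ≤ X i) ∧ ∑ i, X i = 1

/-- Projective distance between two column vectors, i.e. `δ` of the `d×2` matrix whose
columns are `X` and `Y`. -/
noncomputable def deltaV {d : ℕ} (X Y : Fin d → ℝ) : ℝ≥0∞ :=
  deltaC (Matrix.of fun i (j : Fin 2) => if j = 0 then X i else Y i)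

/-!
On `S_I` the matrix with columns `X, Y` satisfies (H) with block `I × {0, 1}`, and each of its
cross ratios is `exp (f i - f k)` for `f = log X - log Y` (or `1`), so `δ(X, Y)` is the
oscillation `max_I f - min_I f`. The metric axioms follow since `f` is additive along `X, Y, Z`,
changes sign when `X` and `Y` are swapped, and has zero oscillation only when `X` and `Y` are
proportional, hence equal. For (iii), `|log x - log y| ≤ |x - y| / min x y` gives the upper
bound, while `∑ (X i - Y i)⁺ ≤ 1 - exp (-max f) ≤ max f` and its mirror image for `Y - X` give
even `‖X - Y‖ ≤ δ(X, Y)`.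
-/

section Oscillation

variable {ι : Type*} {s : Finset ι} (hs : s.Nonempty)

def oscOn (f : ι → ℝ) : ℝ :=
  (s ×ˢ s).sup' (hs.product hs) fun p => f p.1 - f p.2

lemma sub_le_oscOn (f : ι → ℝ) {i j : ι} (hi : i ∈ s) (hj : j ∈ s) :
    f i - f j ≤ oscOn hs f :=
  Finset.le_sup' (fun p : ι × ι => f p.1 - f p.2)
    (Finset.mem_product.2 ⟨hi, hj⟩ : (i, j) ∈ s ×ˢ s)

lemma oscOn_le_iff {f : ι → ℝ} {c : ℝ} :
    oscOn hs f ≤ c ↔ ∀ i ∈ s, ∀ j ∈ s, f i - f j ≤ c := by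
  simp only [oscOn, Finset.sup'_le_iff, Finset.mem_product, and_imp, Prod.forall]
  exact ⟨fun h i hi j hj => h i j hi hj, fun h i j hi hj => h i hi j hj⟩

lemma exists_oscOn_eq (f : ι → ℝ) : ∃ i ∈ s, ∃ j ∈ s, oscOn hs f = f i - f j := by
  obtain ⟨⟨i, j⟩, hij, h⟩ := Finset.exists_mem_eq_sup' (hs.product hs) fun p => f p.1 - f p.2
  exact ⟨i, (Finset.mem_product.1 hij).1, j, (Finset.mem_product.1 hij).2, h⟩

lemma oscOn_nonneg (f : ι → ℝ) : 0 ≤ oscOn hs f := by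
  obtain ⟨i, hi⟩ := id hs
  simpa using sub_le_oscOn hs f hi hi

lemma oscOn_add_le (f g : ι → ℝ) : oscOn hs (f + g) ≤ oscOn hs f + oscOn hs g :=
  (oscOn_le_iff hs).2 fun i hi j hj => by
    have hf := sub_le_oscOn hs f hi hj
    have hg := sub_le_oscOn hs g hi hj
    simp only [Pi.add_apply]
    linarith

lemma oscOn_neg (f : ι → ℝ) : oscOn hs (-f) = oscOn hs f := by
  have key : ∀ g : ι → ℝ, oscOn hs (-g) ≤ oscOn hs g := fun g =>
    (oscOn_le_iff hs).2 fun i hi j hj => by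
      simpa only [Pi.neg_apply, neg_sub_neg] using sub_le_oscOn hs g hj hi
  exact le_antisymm (key f) (by simpa using key (-f))

lemma oscOn_eq_zero_iff {f : ι → ℝ} : oscOn hs f = 0 ↔ ∀ i ∈ s, ∀ j ∈ s, f i = f j := by
  refine ⟨fun h i hi j hj => ?_, fun h => le_antisymm ?_ (oscOn_nonneg hs f)⟩
  · have := sub_le_oscOn hs f hi hj
    have := sub_le_oscOn hs f hj hi
    linarith
  · exact (oscOn_le_iff hs).2 fun i hi j hj => by rw [h i hi j hj, sub_self]

end Oscillation

lemma log_sub_log_le_abs_sub_div_min {x y : ℝ} (hx : 0 < x) (hy : 0 < y) :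
    Real.log x - Real.log y ≤ |x - y| / min x y :=
  calc Real.log x - Real.log y = Real.log (x / y) := (Real.log_div hx.ne' hy.ne').symm
    _ ≤ x / y - 1 := Real.log_le_sub_one_of_pos (div_pos hx hy)
    _ = (x - y) / y := by field_simp
    _ ≤ |x - y| / y := by gcongr; exact le_abs_self _
    _ ≤ |x - y| / min x y := by gcongr; exact min_le_right x y

lemma abs_log_sub_log_le {x y : ℝ} (hx : 0 < x) (hy : 0 < y) :
    |Real.log x - Real.log y| ≤ |x - y| / min x y := by
  refine abs_sub_le_iff.2 ⟨log_sub_log_le_abs_sub_div_min hx hy, ?_⟩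
  rw [abs_sub_comm, min_comm]
  exact log_sub_log_le_abs_sub_div_min hy hx

noncomputable def logRatio {ι : Type*} (X Y : ι → ℝ) (i : ι) : ℝ :=
  Real.log (X i) - Real.log (Y i)

lemma logRatio_add_logRatio {ι : Type*} (X Y Z : ι → ℝ) :
    logRatio X Y + logRatio Y Z = logRatio X Z := by
  ext i
  simp only [logRatio, Pi.add_apply]
  ring

lemma neg_logRatio {ι : Type*} (X Y : ι → ℝ) : -logRatio X Y = logRatio Y X := by
  ext i
  simp only [logRatio, Pi.neg_apply, neg_sub]

lemma log_mul_div_mul {a b c e : ℝ} (ha : a ≠ 0) (hb : b ≠ 0) (hc : c ≠ 0) (he : e ≠ 0) :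
    Real.log (a * b / (c * e)) = (Real.log a - Real.log e) - (Real.log c - Real.log b) := by
  rw [Real.log_div (mul_ne_zero ha hb) (mul_ne_zero hc he), Real.log_mul ha hb,
    Real.log_mul hc he]
  ring

lemma deltaC_ne_top_iff {d₁ d₂ : ℕ} (A : Matrix (Fin d₁) (Fin d₂) ℝ) :
    deltaC A ≠ ⊤ ↔ satH A := by
  unfold deltaC
  split_ifs with h <;> simp [h]

section TwoColumns

variable {d : ℕ}

def colPair (X Y : Fin d → ℝ) : Matrix (Fin d) (Fin 2) ℝ :=
  Matrix.of fun i j => if j = 0 then X i else Y i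

@[simp] lemma colPair_apply_zero (X Y : Fin d → ℝ) (i : Fin d) : colPair X Y i 0 = X i := rfl

@[simp] lemma colPair_apply_one (X Y : Fin d → ℝ) (i : Fin d) : colPair X Y i 1 = Y i := rfl

lemma deltaV_eq_deltaC_colPair (X Y : Fin d → ℝ) : deltaV X Y = deltaC (colPair X Y) := rfl

lemma satH_colPair_iff {X Y : Fin d → ℝ} (hX : ∃ i, X i ≠ 0) (hY : ∃ i, Y i ≠ 0) :
    satH (colPair X Y) ↔ ∀ i, (X i ≠ 0 ↔ Y i ≠ 0) := by
  constructor
  · rintro ⟨I, J, -, -, hIJ⟩ i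
    obtain ⟨iX, hiX⟩ := hX
    obtain ⟨iY, hiY⟩ := hY
    have h0 : (0 : Fin 2) ∈ J := ((hIJ iX 0).1 hiX).2
    have h1 : (1 : Fin 2) ∈ J := ((hIJ iY 1).1 hiY).2
    have hcol₀ := hIJ i 0
    have hcol₁ := hIJ i 1
    simp only [colPair_apply_zero, colPair_apply_one] at hcol₀ hcol₁
    simp [hcol₀, hcol₁, h0, h1]
  · intro h
    obtain ⟨i₀, hi₀⟩ := hX
    refine ⟨{i | X i ≠ 0}, Set.univ, ⟨i₀, hi₀⟩, Set.univ_nonempty, fun i j => ?_⟩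
    fin_cases j <;> simp [h i]

lemma deltaV_ne_top_iff {X Y : Fin d → ℝ} (hX : ∃ i, X i ≠ 0) (hY : ∃ i, Y i ≠ 0) :
    deltaV X Y ≠ ⊤ ↔ ∀ i, (X i ≠ 0 ↔ Y i ≠ 0) := by
  rw [deltaV_eq_deltaC_colPair, deltaC_ne_top_iff, satH_colPair_iff hX hY]

lemma deltaV_eq_ofReal_oscOn {I : Finset (Fin d)} (hI : I.Nonempty) {X Y : Fin d → ℝ}
    (hXI : ∀ i, X i ≠ 0 ↔ i ∈ I) (hYI : ∀ i, Y i ≠ 0 ↔ i ∈ I) :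
    deltaV X Y = ENNReal.ofReal (oscOn hI (logRatio X Y)) := by
  have hA : ∀ i j, colPair X Y i j ≠ 0 ↔ i ∈ I := by
    intro i j
    fin_cases j
    exacts [hXI i, hYI i]
  have hsat : satH (colPair X Y) :=
    ⟨I, Set.univ, hI, Set.univ_nonempty, fun i j => by simp [hA]⟩
  rw [deltaV_eq_deltaC_colPair, deltaC, if_pos hsat]
  congr 1
  apply IsGreatest.csSup_eq
  constructor
  · obtain ⟨i, hi, k, hk, h⟩ := exists_oscOn_eq hI (logRatio X Y)
    refine ⟨i, k, 0, 1, (hA i 0).2 hi, (hA k 0).2 hk, (hA i 1).2 hi, (hA k 1).2 hk, ?_⟩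
    rw [log_mul_div_mul ((hA i 0).2 hi) ((hA k 1).2 hk) ((hA k 0).2 hk) ((hA i 1).2 hi), h]
    rfl
  · rintro x ⟨i, k, j, l, hij, hkj, hil, hkl, rfl⟩
    rw [log_mul_div_mul hij hkl hkj hil]
    have hik := sub_le_oscOn hI (logRatio X Y) ((hA i j).1 hij) ((hA k j).1 hkj)
    have hki := sub_le_oscOn hI (logRatio X Y) ((hA k j).1 hkj) ((hA i j).1 hij)
    have h0 := oscOn_nonneg hI (logRatio X Y)
    simp only [logRatio] at hik hki
    fin_cases j <;> fin_cases l <;>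
      simp only [Fin.zero_eta, Fin.mk_one, colPair_apply_zero, colPair_apply_one] <;> linarith

end TwoColumns

lemma l1_nonneg {d : ℕ} (v : Fin d → ℝ) : 0 ≤ l1 v :=
  Finset.sum_nonneg fun i _ => abs_nonneg (v i)

lemma l1_sub_eq_sum_posPart_add_sum_posPart {d : ℕ} (X Y : Fin d → ℝ) :
    l1 (X - Y) = ∑ i, (X i - Y i)⁺ + ∑ i, (Y i - X i)⁺ := by
  rw [l1, ← Finset.sum_add_distrib]
  refine Finset.sum_congr rfl fun i _ => ?_
  rw [Pi.sub_apply, ← neg_sub (X i) (Y i), posPart_neg, posPart_add_negPart]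

lemma exists_ne_zero_of_probVec {d : ℕ} {X : Fin d → ℝ} (hX : probVec X) : ∃ i, X i ≠ 0 := by
  by_contra! h
  simpa [h] using hX.2

section Stratum

variable {d : ℕ} {I : Finset (Fin d)} {X Y : Fin d → ℝ}

def probVecWithSupport (I : Finset (Fin d)) : Set (Fin d → ℝ) :=
  {X | probVec X ∧ ∀ i, X i ≠ 0 ↔ i ∈ I}

lemma pos_of_mem_probVecWithSupport (hX : X ∈ probVecWithSupport I) {i : Fin d} (hi : i ∈ I) :
    0 < X i :=
  (hX.1.1 i).lt_of_ne ((hX.2 i).2 hi).symm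

lemma eq_zero_of_mem_probVecWithSupport (hX : X ∈ probVecWithSupport I) {i : Fin d}
    (hi : i ∉ I) : X i = 0 :=
  not_not.1 fun h => hi ((hX.2 i).1 h)

lemma sum_eq_one_of_mem_probVecWithSupport (hX : X ∈ probVecWithSupport I) :
    ∑ i ∈ I, X i = 1 := by
  rw [← hX.1.2]
  exact Finset.sum_subset (Finset.subset_univ I) fun i _ hi =>
    eq_zero_of_mem_probVecWithSupport hX hi

lemma nonempty_of_mem_probVecWithSupport (hX : X ∈ probVecWithSupport I) : I.Nonempty :=
  let ⟨i, hi⟩ := exists_ne_zero_of_probVec hX.1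
  ⟨i, (hX.2 i).1 hi⟩

lemma eq_of_oscOn_logRatio_eq_zero (hI : I.Nonempty) (hX : X ∈ probVecWithSupport I)
    (hY : Y ∈ probVecWithSupport I) (h : oscOn hI (logRatio X Y) = 0) : X = Y := by
  have hcross : ∀ i k, X i * Y k = X k * Y i := by
    intro i k
    by_cases hi : i ∈ I
    · by_cases hk : k ∈ I
      · have hXi := pos_of_mem_probVecWithSupport hX hi
        have hXk := pos_of_mem_probVecWithSupport hX hk
        have hYi := pos_of_mem_probVecWithSupport hY hi
        have hYk := pos_of_mem_probVecWithSupport hY hk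
        have hlog := (oscOn_eq_zero_iff hI).1 h i hi k hk
        refine Real.log_injOn_pos (mul_pos hXi hYk) (mul_pos hXk hYi) ?_
        simp only [logRatio] at hlog
        rw [Real.log_mul hXi.ne' hYk.ne', Real.log_mul hXk.ne' hYi.ne']
        linarith
      · simp [eq_zero_of_mem_probVecWithSupport hX hk, eq_zero_of_mem_probVecWithSupport hY hk]
    · simp [eq_zero_of_mem_probVecWithSupport hX hi, eq_zero_of_mem_probVecWithSupport hY hi]
  funext i
  calc X i = ∑ k, X i * Y k := by rw [← Finset.mul_sum, hY.1.2, mul_one]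
    _ = ∑ k, X k * Y i := Finset.sum_congr rfl fun k _ => hcross i k
    _ = Y i := by rw [← Finset.sum_mul, hX.1.2, one_mul]

lemma sum_posPart_sub_le (hX : X ∈ probVecWithSupport I) (hY : Y ∈ probVecWithSupport I)
    {c : ℝ} (hc : ∀ i ∈ I, logRatio X Y i ≤ c) : ∑ i, (X i - Y i)⁺ ≤ c := by
  have hc₀ : 0 ≤ c := by
    obtain ⟨i, hi, hYX⟩ := Finset.exists_le_of_sum_le (nonempty_of_mem_probVecWithSupport hX)
      (show ∑ i ∈ I, Y i ≤ ∑ i ∈ I, X i by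
        rw [sum_eq_one_of_mem_probVecWithSupport hX, sum_eq_one_of_mem_probVecWithSupport hY])
    have hci : Real.log (X i) - Real.log (Y i) ≤ c := hc i hi
    linarith [Real.log_le_log (pos_of_mem_probVecWithSupport hY hi) hYX]
  have hterm : ∀ i, (X i - Y i)⁺ ≤ X i * (1 - Real.exp (-c)) := by
    intro i
    by_cases hi : i ∈ I
    · have hXi := pos_of_mem_probVecWithSupport hX hi
      have hYi := pos_of_mem_probVecWithSupport hY hi
      have hci : Real.log (X i) - Real.log (Y i) ≤ c := hc i hi
      have hexp : X i * Real.exp (-c) ≤ Y i := by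
        rw [← Real.exp_log hXi, ← Real.exp_add, ← Real.exp_log hYi, Real.exp_le_exp]
        linarith
      have hexp₁ : Real.exp (-c) ≤ 1 := Real.exp_le_one_iff.2 (neg_nonpos.2 hc₀)
      rw [posPart_def]
      exact max_le (by linarith) (mul_nonneg hXi.le (by linarith))
    · simp [eq_zero_of_mem_probVecWithSupport hX hi, eq_zero_of_mem_probVecWithSupport hY hi]
  calc ∑ i, (X i - Y i)⁺ ≤ ∑ i, X i * (1 - Real.exp (-c)) := Finset.sum_le_sum fun i _ => hterm i
    _ = 1 - Real.exp (-c) := by rw [← Finset.sum_mul, hX.1.2, one_mul]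
    _ ≤ c := by linarith [Real.add_one_le_exp (-c)]

lemma l1_sub_le_oscOn_logRatio (hI : I.Nonempty) (hX : X ∈ probVecWithSupport I)
    (hY : Y ∈ probVecWithSupport I) : l1 (X - Y) ≤ oscOn hI (logRatio X Y) := by
  obtain ⟨i, hi, hmax⟩ := Finset.exists_max_image I (logRatio X Y) hI
  obtain ⟨k, hk, hmin⟩ := Finset.exists_min_image I (logRatio X Y) hI
  have hmin' : ∀ j ∈ I, logRatio Y X j ≤ logRatio Y X k := fun j hj => by
    simpa only [← neg_logRatio X Y, Pi.neg_apply, neg_le_neg_iff] using hmin j hj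
  calc l1 (X - Y) = ∑ j, (X j - Y j)⁺ + ∑ j, (Y j - X j)⁺ :=
        l1_sub_eq_sum_posPart_add_sum_posPart X Y
    _ ≤ logRatio X Y i + logRatio Y X k :=
        add_le_add (sum_posPart_sub_le hX hY hmax) (sum_posPart_sub_le hY hX hmin')
    _ = logRatio X Y i - logRatio X Y k := by
        rw [← neg_logRatio X Y, Pi.neg_apply, sub_eq_add_neg]
    _ ≤ oscOn hI (logRatio X Y) := sub_le_oscOn hI _ hi hk

lemma oscOn_logRatio_le_l1_sub_div (hI : I.Nonempty) (hX : ∀ i ∈ I, 0 < X i)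
    (hY : ∀ i ∈ I, 0 < Y i) :
    oscOn hI (logRatio X Y) ≤ l1 (X - Y) / I.inf' hI fun i => min (X i) (Y i) := by
  set m := I.inf' hI fun i => min (X i) (Y i)
  have hm : 0 < m := (Finset.lt_inf'_iff hI).2 fun i hi => lt_min (hX i hi) (hY i hi)
  have hbound : ∀ i ∈ I, |logRatio X Y i| ≤ |X i - Y i| / m := fun i hi =>
    (abs_log_sub_log_le (hX i hi) (hY i hi)).trans
      (div_le_div_of_nonneg_left (abs_nonneg _) hm (Finset.inf'_le _ hi))
  obtain ⟨i, hi, k, hk, h⟩ := exists_oscOn_eq hI (logRatio X Y)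
  rw [h]
  by_cases hik : i = k
  · rw [hik, sub_self]
    exact div_nonneg (l1_nonneg _) hm.le
  · calc logRatio X Y i - logRatio X Y k ≤ |logRatio X Y i| + |logRatio X Y k| := by
          linarith [le_abs_self (logRatio X Y i), neg_abs_le (logRatio X Y k)]
      _ ≤ (|(X - Y) i| + |(X - Y) k|) / m := by
          rw [add_div]
          exact add_le_add (hbound i hi) (hbound k hk)
      _ ≤ l1 (X - Y) / m := by
          gcongr
          exact Finset.add_le_sum (f := fun j => |(X - Y) j|) (fun j _ => abs_nonneg _)
            (Finset.mem_univ i) (Finset.mem_univ k) hik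

end Stratum

section Metric

variable {d : ℕ} {I : Finset (Fin d)} {X Y Z : Fin d → ℝ}

lemma deltaV_eq_zero_iff (hX : X ∈ probVecWithSupport I) (hY : Y ∈ probVecWithSupport I) :
    deltaV X Y = 0 ↔ X = Y := by
  have hI := nonempty_of_mem_probVecWithSupport hX
  rw [deltaV_eq_ofReal_oscOn hI hX.2 hY.2, ENNReal.ofReal_eq_zero,
    (oscOn_nonneg hI (logRatio X Y)).ge_iff_eq']
  refine ⟨eq_of_oscOn_logRatio_eq_zero hI hX hY, ?_⟩
  rintro rfl
  exact (oscOn_eq_zero_iff hI).2 fun i _ j _ => by simp [logRatio]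

lemma deltaV_comm (hI : I.Nonempty) (hXI : ∀ i, X i ≠ 0 ↔ i ∈ I)
    (hYI : ∀ i, Y i ≠ 0 ↔ i ∈ I) : deltaV X Y = deltaV Y X := by
  rw [deltaV_eq_ofReal_oscOn hI hXI hYI, deltaV_eq_ofReal_oscOn hI hYI hXI, ← neg_logRatio,
    oscOn_neg]

lemma deltaV_le_add (hI : I.Nonempty) (hXI : ∀ i, X i ≠ 0 ↔ i ∈ I)
    (hYI : ∀ i, Y i ≠ 0 ↔ i ∈ I) (hZI : ∀ i, Z i ≠ 0 ↔ i ∈ I) :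
    deltaV X Z ≤ deltaV X Y + deltaV Y Z := by
  rw [deltaV_eq_ofReal_oscOn hI hXI hZI, deltaV_eq_ofReal_oscOn hI hXI hYI,
    deltaV_eq_ofReal_oscOn hI hYI hZI, ← ENNReal.ofReal_add (oscOn_nonneg hI _)
    (oscOn_nonneg hI _), ← logRatio_add_logRatio X Y Z]
  exact ENNReal.ofReal_le_ofReal (oscOn_add_le hI _ _)

end Metric

/-- **Proposition 2.4.** For `∅ ≠ I ⊆ {1,…,d}` and `S_I = {X ∈ S_d : I(X) = I}`:
(i) for probability vectors, `δ(X,Y) < ∞` iff `Δ(X) = Δ(Y)`;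
(ii) `δ` restricted to `S_I` is a metric;
(iii) `(1/d)·‖X−Y‖ ≤ δ(X,Y) ≤ ‖X−Y‖ / min_{i∈I} min(X i, Y i)`. -/
theorem projectiveDistance_props {d : ℕ} (I : Finset (Fin d)) (hI : I.Nonempty) :
    -- (i)
    (∀ X Y : Fin d → ℝ, probVec X → probVec Y →
      (deltaV X Y ≠ ⊤ ↔ ∀ i, (X i ≠ 0 ↔ Y i ≠ 0))) ∧
    -- (ii) : δ is a finite metric on S_I
    (∀ X Y Z : Fin d → ℝ,
      probVec X → probVec Y → probVec Z →
      (∀ i, X i ≠ 0 ↔ i ∈ I) → (∀ i, Y i ≠ 0 ↔ i ∈ I) → (∀ i, Z i ≠ 0 ↔ i ∈ I) →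
      deltaV X Y ≠ ⊤ ∧ (deltaV X Y = 0 ↔ X = Y) ∧ deltaV X Y = deltaV Y X ∧
        deltaV X Z ≤ deltaV X Y + deltaV Y Z) ∧
    -- (iii)
    (∀ X Y : Fin d → ℝ,
      probVec X → probVec Y →
      (∀ i, X i ≠ 0 ↔ i ∈ I) → (∀ i, Y i ≠ 0 ↔ i ∈ I) →
      ENNReal.ofReal ((1 / (d : ℝ)) * l1 (X - Y)) ≤ deltaV X Y ∧
        deltaV X Y ≤
          ENNReal.ofReal (l1 (X - Y) / I.inf' hI fun i => min (X i) (Y i))) := by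
  refine ⟨fun X Y hX hY =>
    deltaV_ne_top_iff (exists_ne_zero_of_probVec hX) (exists_ne_zero_of_probVec hY), ?_, ?_⟩
  · intro X Y Z hX hY _ hXI hYI hZI
    refine ⟨?_, deltaV_eq_zero_iff ⟨hX, hXI⟩ ⟨hY, hYI⟩, deltaV_comm hI hXI hYI,
      deltaV_le_add hI hXI hYI hZI⟩
    rw [deltaV_eq_ofReal_oscOn hI hXI hYI]
    exact ENNReal.ofReal_ne_top
  · intro X Y hX hY hXI hYI
    rw [deltaV_eq_ofReal_oscOn hI hXI hYI]
    have hXpos := fun i (hi : i ∈ I) => pos_of_mem_probVecWithSupport ⟨hX, hXI⟩ hi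
    have hYpos := fun i (hi : i ∈ I) => pos_of_mem_probVecWithSupport ⟨hY, hYI⟩ hi
    refine ⟨ENNReal.ofReal_le_ofReal ?_,
      ENNReal.ofReal_le_ofReal (oscOn_logRatio_le_l1_sub_div hI hXpos hYpos)⟩
    calc 1 / (d : ℝ) * l1 (X - Y) ≤ l1 (X - Y) :=
          mul_le_of_le_one_left (l1_nonneg _) (by simpa using Nat.cast_inv_le_one (α := ℝ) d)
      _ ≤ oscOn hI (logRatio X Y) := l1_sub_le_oscOn_logRatio hI ⟨hX, hXI⟩ ⟨hY, hYI⟩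
end

section
/- Let A and B be d×d matrices with nonnegative entries, and suppose A ∈ H2(Λ_a) ∩ H3(λ_a) and B ∈ H2(Λ_b) ∩ H3(λ_b), where Λ_a, Λ_b ≥ 1 and λ_a, λ_b ≥ 0. Then the product AB belongs to H3(λ_a·λ_b) and to H2(Λ_a + λ_a·Λ_b). -/
open Matrix Filter Finset Topology

/-- Normalization of a vector by its ℓ¹-norm. -/
noncomputable def nrm {d : ℕ} (v : Fin d → ℝ) : Fin d → ℝ := (l1 v)⁻¹ • v

/-- The `j`-th column of a matrix, i.e. `A ⬝ U_j`. -/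
def colv {d1 d2 : ℕ} (A : Matrix (Fin d1) (Fin d2) ℝ) (j : Fin d2) : Fin d1 → ℝ :=
  fun i => A i j

/-- Class `H1`: any two columns have comparable supports. -/
def memH1 {d1 d2 : ℕ} (A : Matrix (Fin d1) (Fin d2) ℝ) : Prop :=
  ∀ j0 j1 : Fin d2, (∀ i, A i j0 ≠ 0 → A i j1 ≠ 0) ∨ (∀ i, A i j1 ≠ 0 → A i j0 ≠ 0)

/-- Class `H2(Λ)`: `A i0 j0 ≠ 0` implies `‖A U_{j0}‖ ≤ Λ · A i0 j0`. -/
def memH2 {d1 d2 : ℕ} (L : ℝ) (A : Matrix (Fin d1) (Fin d2) ℝ) : Prop :=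
  ∀ i0 j0, A i0 j0 ≠ 0 → (∑ i, A i j0) ≤ L * A i0 j0

/-- Class `H3(λ)`: `A i0 j0 ≠ 0` and `A i0 j1 = 0` imply `‖A U_{j1}‖ ≤ λ · A i0 j0`. -/
def memH3 {d1 d2 : ℕ} (l : ℝ) (A : Matrix (Fin d1) (Fin d2) ℝ) : Prop :=
  ∀ i0 j0 j1, A i0 j0 ≠ 0 → A i0 j1 = 0 → (∑ i, A i j1) ≤ l * A i0 j0

/-- `blockProd A m n = A (m+1) * A (m+2) * ⋯ * A n` (identity if `n ≤ m`). -/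
noncomputable def blockProd {d : ℕ} (A : ℕ → Matrix (Fin d) (Fin d) ℝ) (m n : ℕ) :
    Matrix (Fin d) (Fin d) ℝ :=
  ((List.range (n - m)).map fun i => A (m + 1 + i)).prod

/-- Condition (C) w.r.t. `0 ≤ lam < 1 ≤ Lam` and the sequence `s` with
`0 = s 0 = s 1 < s 2 < ⋯`: for every `n ≥ s 2`, with `k = k(n)` the index such that
`s (k+1) ≤ n < s (k+2)`, the product `Q n = A (s k + 1) ⋯ A n` belongs to
`H1 ∩ H2(Lam) ∩ H3(lam)`. -/
def condC {d : ℕ} (A : ℕ → Matrix (Fin d) (Fin d) ℝ) (lam Lam : ℝ) (s : ℕ → ℕ) : Prop :=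
  s 0 = 0 ∧ s 1 = 0 ∧ (∀ k, 1 ≤ k → s k < s (k + 1)) ∧
    ∀ n k, s 2 ≤ n → s (k + 1) ≤ n → n < s (k + 2) →
      memH1 (blockProd A (s k) n) ∧ memH2 Lam (blockProd A (s k) n) ∧
        memH3 lam (blockProd A (s k) n)

/-- **Lemma 2.9.** If `A ∈ H2(Λa) ∩ H3(λa)` and `B ∈ H2(Λb) ∩ H3(λb)`, then
`A*B ∈ H3(λa·λb)` and `A*B ∈ H2(Λa + λa·Λb)`. -/
theorem H2_H3_mul {d : ℕ} (A B : Matrix (Fin d) (Fin d) ℝ)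
    (hA : ∀ i j, 0 ≤ A i j) (hB : ∀ i j, 0 ≤ B i j)
    (La Lb la lb : ℝ) (hLa : 1 ≤ La) (hLb : 1 ≤ Lb) (hla : 0 ≤ la) (hlb : 0 ≤ lb)
    (h2a : memH2 La A) (h3a : memH3 la A) (h2b : memH2 Lb B) (h3b : memH3 lb B) :
    memH3 (la * lb) (A * B) ∧ memH2 (La + la * Lb) (A * B) := by
  have swap : ∀ j, (∑ i, (A * B) i j) = ∑ k, (∑ i, A i k) * B k j := by
    intro j
    simp only [Matrix.mul_apply]
    rw [Finset.sum_comm]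
    simp [Finset.sum_mul]
  constructor
  · intro i0 j0 j1 h0 h1
    rw [Matrix.mul_apply] at h0
    obtain ⟨k0, -, hk0⟩ := Finset.exists_ne_zero_of_sum_ne_zero h0
    obtain ⟨hA0, hB0⟩ := mul_ne_zero_iff.mp hk0
    rw [Matrix.mul_apply] at h1
    have hz : ∀ k, A i0 k * B k j1 = 0 := by
      intro k
      have := (Finset.sum_eq_zero_iff_of_nonneg
        (fun k _ => mul_nonneg (hA i0 k) (hB k j1))).mp h1 k (Finset.mem_univ k)
      exact this
    have hBk0 : B k0 j1 = 0 := by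
      rcases mul_eq_zero.mp (hz k0) with h | h
      · exact absurd h hA0
      · exact h
    have hbd : ∀ k, (∑ i, A i k) * B k j1 ≤ (la * A i0 k0) * B k j1 := by
      intro k
      by_cases hk : B k j1 = 0
      · simp [hk]
      · have hAik : A i0 k = 0 := by
          rcases mul_eq_zero.mp (hz k) with h | h
          · exact h
          · exact absurd h hk
        exact mul_le_mul_of_nonneg_right (h3a i0 k0 k hA0 hAik) (hB k j1)
    calc (∑ i, (A * B) i j1) = ∑ k, (∑ i, A i k) * B k j1 := swap j1
      _ ≤ ∑ k, (la * A i0 k0) * B k j1 := Finset.sum_le_sum fun k _ => hbd k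
      _ = la * A i0 k0 * ∑ k, B k j1 := by rw [← Finset.mul_sum]
      _ ≤ la * A i0 k0 * (lb * B k0 j0) := by
          apply mul_le_mul_of_nonneg_left (h3b k0 j0 j1 hB0 hBk0)
            (mul_nonneg hla (hA i0 k0))
      _ = la * lb * (A i0 k0 * B k0 j0) := by ring
      _ ≤ la * lb * ∑ k, A i0 k * B k j0 := by
          apply mul_le_mul_of_nonneg_left _ (mul_nonneg hla hlb)
          exact Finset.single_le_sum
            (fun k _ => mul_nonneg (hA i0 k) (hB k j0)) (Finset.mem_univ k0)
      _ = la * lb * (A * B) i0 j0 := by rw [Matrix.mul_apply]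
  · intro i0 j0 h0
    rw [Matrix.mul_apply] at h0
    obtain ⟨k0, -, hk0⟩ := Finset.exists_ne_zero_of_sum_ne_zero h0
    obtain ⟨hA0, hB0⟩ := mul_ne_zero_iff.mp hk0
    have hbd : ∀ k, (∑ i, A i k) * B k j0 ≤
        La * (A i0 k * B k j0) + (la * A i0 k0) * B k j0 := by
      intro k
      by_cases hk : A i0 k = 0
      · have h1 : (∑ i, A i k) * B k j0 ≤ (la * A i0 k0) * B k j0 :=
          mul_le_mul_of_nonneg_right (h3a i0 k0 k hA0 hk) (hB k j0)
        have h2 : 0 ≤ La * (A i0 k * B k j0) := by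
          simp [hk]
        linarith
      · have h1 : (∑ i, A i k) * B k j0 ≤ (La * A i0 k) * B k j0 :=
          mul_le_mul_of_nonneg_right (h2a i0 k hk) (hB k j0)
        have h2 : 0 ≤ (la * A i0 k0) * B k j0 :=
          mul_nonneg (mul_nonneg hla (hA i0 k0)) (hB k j0)
        nlinarith [h1, h2]
    have key : (∑ i, (A * B) i j0) ≤
        La * ∑ k, A i0 k * B k j0 + (la * A i0 k0) * ∑ k, B k j0 := by
      calc (∑ i, (A * B) i j0) = ∑ k, (∑ i, A i k) * B k j0 := swap j0
        _ ≤ ∑ k, (La * (A i0 k * B k j0) + (la * A i0 k0) * B k j0) :=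
            Finset.sum_le_sum fun k _ => hbd k
        _ = La * ∑ k, A i0 k * B k j0 + (la * A i0 k0) * ∑ k, B k j0 := by
            rw [Finset.sum_add_distrib, ← Finset.mul_sum, ← Finset.mul_sum]
    have hb : (∑ k, B k j0) ≤ Lb * B k0 j0 := h2b k0 j0 hB0
    have hterm : A i0 k0 * B k0 j0 ≤ ∑ k, A i0 k * B k j0 :=
      Finset.single_le_sum (fun k _ => mul_nonneg (hA i0 k) (hB k j0))
        (Finset.mem_univ k0)
    have hABij : (A * B) i0 j0 = ∑ k, A i0 k * B k j0 := Matrix.mul_apply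
    rw [hABij]
    have h3 : (la * A i0 k0) * ∑ k, B k j0 ≤ la * Lb * (A i0 k0 * B k0 j0) := by
      have := mul_le_mul_of_nonneg_left hb (mul_nonneg hla (hA i0 k0))
      nlinarith [this]
    have h4 : la * Lb * (A i0 k0 * B k0 j0) ≤ la * Lb * ∑ k, A i0 k * B k j0 :=
      mul_le_mul_of_nonneg_left hterm
        (mul_nonneg hla (by linarith))
    nlinarith [key, h3, h4]
end

section
/- Let A, B, C be d×d matrices with nonnegative entries. Then: (a) Δ(A U_{j0}) ≤ Δ(A U_{j1}) implies Δ(BA U_{j0}) ≤ Δ(BA U_{j1}); (b) Δ(A U_{j0}) = Δ(A U_{j1}) implies Δ(BA U_{j0}) = Δ(BA U_{j1}); (c) Δ(A U_{j0}) = 0 implies Δ(BA U_{j0}) = 0. Moreover, if A ∈ H1, then: (d) BAC U_j ≠ 0 implies Δ(BAC U_j) ∈ {Δ(BA U_1), …, Δ(BA U_d)}; (e) #Col(BAC) ≤ #Col(A); (f) BAC ∈ H1. -/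
open Matrix Filter Finset Topology

open scoped Classical in
/-- `#Col M` : the number of distinct nonzero column supports of `M`. -/
noncomputable def colCount {d : ℕ} (M : Matrix (Fin d) (Fin d) ℝ) : ℕ :=
  ((Finset.univ.image fun j => Finset.univ.filter fun i => M i j ≠ 0).erase ∅).card

lemma entry_mul_nonneg {d : ℕ} (B A : Matrix (Fin d) (Fin d) ℝ)
    (hB : ∀ i j, 0 ≤ B i j) (hA : ∀ i j, 0 ≤ A i j) (i j : Fin d) :
    0 ≤ (B * A) i j := by
  rw [Matrix.mul_apply]
  exact Finset.sum_nonneg fun k _ => mul_nonneg (hB i k) (hA k j)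

lemma entry_mul_ne_zero {d : ℕ} (B A : Matrix (Fin d) (Fin d) ℝ)
    (hB : ∀ i j, 0 ≤ B i j) (hA : ∀ i j, 0 ≤ A i j) (i j : Fin d) :
    (B * A) i j ≠ 0 ↔ ∃ k, B i k ≠ 0 ∧ A k j ≠ 0 := by
  rw [Matrix.mul_apply]
  have hz : (∑ k, B i k * A k j = 0) ↔ ∀ k, B i k * A k j = 0 := by
    rw [Finset.sum_eq_zero_iff_of_nonneg (fun k _ => mul_nonneg (hB i k) (hA k j))]
    simp
  constructor
  · intro h
    by_contra hc
    push_neg at hc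
    refine h (hz.2 fun k => ?_)
    rcases eq_or_ne (B i k) 0 with h1 | h1
    · simp [h1]
    · simp [hc k h1]
  · rintro ⟨k, hk1, hk2⟩ h
    exact mul_ne_zero hk1 hk2 (hz.1 h k)

/-- **Lemma 2.10.** For nonnegative `A, B, C`:
(a) column-support inclusion is preserved under left multiplication;
(b) column-support equality is preserved;
(c) zero columns are preserved;
and if `A ∈ H1`:
(d) each nonzero column of `BAC` has the support of some column of `BA`;
(e) `#Col (BAC) ≤ #Col A`;
(f) `BAC ∈ H1`. -/
theorem columns_lemma {d : ℕ} (A B C : Matrix (Fin d) (Fin d) ℝ)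
    (hA : ∀ i j, 0 ≤ A i j) (hB : ∀ i j, 0 ≤ B i j) (hC : ∀ i j, 0 ≤ C i j) :
    -- (a)
    (∀ j0 j1 : Fin d, (∀ i, A i j0 ≠ 0 → A i j1 ≠ 0) →
      ∀ i, (B * A) i j0 ≠ 0 → (B * A) i j1 ≠ 0) ∧
    -- (b)
    (∀ j0 j1 : Fin d, (∀ i, A i j0 ≠ 0 ↔ A i j1 ≠ 0) →
      ∀ i, (B * A) i j0 ≠ 0 ↔ (B * A) i j1 ≠ 0) ∧
    -- (c)
    (∀ j0 : Fin d, (∀ i, A i j0 = 0) → ∀ i, (B * A) i j0 = 0) ∧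
    (memH1 A →
      -- (d)
      (∀ j : Fin d, colv (B * A * C) j ≠ 0 →
        ∃ j' : Fin d, ∀ i, (B * A * C) i j ≠ 0 ↔ (B * A) i j' ≠ 0) ∧
      -- (e)
      colCount (B * A * C) ≤ colCount A ∧
      -- (f)
      memH1 (B * A * C)) := by
  classical
  have hBAn : ∀ i j, 0 ≤ (B * A) i j := entry_mul_nonneg B A hB hA
  have key : ∀ i j, (B * A) i j ≠ 0 ↔ ∃ k, B i k ≠ 0 ∧ A k j ≠ 0 :=
    entry_mul_ne_zero B A hB hA
  have keyC : ∀ i j, (B * A * C) i j ≠ 0 ↔ ∃ k, (B * A) i k ≠ 0 ∧ C k j ≠ 0 :=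
    entry_mul_ne_zero (B * A) C hBAn hC
  have parta : ∀ j0 j1 : Fin d, (∀ i, A i j0 ≠ 0 → A i j1 ≠ 0) →
      ∀ i, (B * A) i j0 ≠ 0 → (B * A) i j1 ≠ 0 := by
    intro j0 j1 h i hi
    rcases (key i j0).1 hi with ⟨k, hk1, hk2⟩
    exact (key i j1).2 ⟨k, hk1, h k hk2⟩
  have partb : ∀ j0 j1 : Fin d, (∀ i, A i j0 ≠ 0 ↔ A i j1 ≠ 0) →
      ∀ i, (B * A) i j0 ≠ 0 ↔ (B * A) i j1 ≠ 0 := by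
    intro j0 j1 h i
    exact ⟨parta j0 j1 (fun i hi => (h i).1 hi) i, parta j1 j0 (fun i hi => (h i).2 hi) i⟩
  have partc : ∀ j0 : Fin d, (∀ i, A i j0 = 0) → ∀ i, (B * A) i j0 = 0 := by
    intro j0 h i
    by_contra hi
    rcases (key i j0).1 hi with ⟨k, _, hk2⟩
    exact hk2 (h k)
  refine ⟨parta, partb, partc, ?_⟩
  intro hA1
  have hBA1 : memH1 (B * A) := fun j0 j1 => (hA1 j0 j1).imp (parta j0 j1) (parta j1 j0)
  have partd : ∀ j : Fin d, colv (B * A * C) j ≠ 0 →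
      ∃ j' : Fin d, ∀ i, (B * A * C) i j ≠ 0 ↔ (B * A) i j' ≠ 0 := by
    intro j hj
    have hne : ∃ k, C k j ≠ 0 := by
      by_contra h
      push_neg at h
      apply hj
      funext i
      show (B * A * C) i j = 0
      by_contra hi
      rcases (keyC i j).1 hi with ⟨k, _, hk⟩
      exact hk (h k)
    set S : Finset (Fin d) := Finset.univ.filter (fun k => C k j ≠ 0) with hS
    have hSne : S.Nonempty := by
      rcases hne with ⟨k, hk⟩; exact ⟨k, by simp [hS, hk]⟩
    obtain ⟨k', hk'S, hmax⟩ := S.exists_max_image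
        (fun k => (Finset.univ.filter (fun i => (B * A) i k ≠ 0)).card) hSne
    have hk'C : C k' j ≠ 0 := by simpa [hS] using hk'S
    have hsub : ∀ k ∈ S, ∀ i, (B * A) i k ≠ 0 → (B * A) i k' ≠ 0 := by
      intro k hk i hik
      rcases hBA1 k k' with h | h
      · exact h i hik
      · have hss : (Finset.univ.filter fun i => (B * A) i k' ≠ 0) ⊆
            (Finset.univ.filter fun i => (B * A) i k ≠ 0) := by
          intro x hx
          simp only [Finset.mem_filter, Finset.mem_univ, true_and] at hx ⊢
          exact h x hx
        have heq := Finset.eq_of_subset_of_card_le hss (hmax k hk)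
        have hmem : i ∈ (Finset.univ.filter fun i => (B * A) i k' ≠ 0) := by
          rw [heq]; simp [hik]
        simpa using hmem
    refine ⟨k', fun i => ⟨?_, ?_⟩⟩
    · intro hi
      rcases (keyC i j).1 hi with ⟨k, hk1, hk2⟩
      exact hsub k (by simp [hS, hk2]) i hk1
    · intro hi
      exact (keyC i j).2 ⟨k', hi, hk'C⟩
  have colv_ne : ∀ (M : Matrix (Fin d) (Fin d) ℝ) (j : Fin d),
      (∃ i, M i j ≠ 0) → colv M j ≠ 0 := by
    intro M j ⟨i, hi⟩ hc
    exact hi (congrFun hc i)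
  refine ⟨partd, ?_, ?_⟩
  · -- (e)
    have step1 : colCount (B * A * C) ≤ colCount (B * A) := by
      unfold colCount
      apply Finset.card_le_card
      intro T hT
      rcases Finset.mem_erase.1 hT with ⟨hT0, hT1⟩
      rcases Finset.mem_image.1 hT1 with ⟨j, _, hj⟩
      have hcne : colv (B * A * C) j ≠ 0 := by
        apply colv_ne
        by_contra h
        push_neg at h
        apply hT0
        rw [← hj]
        ext i
        simp [h i]
      obtain ⟨j', hj'⟩ := partd j hcne
      refine Finset.mem_erase.2 ⟨hT0, Finset.mem_image.2 ⟨j', Finset.mem_univ _, ?_⟩⟩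
      rw [← hj]
      ext i
      simp only [Finset.mem_filter, Finset.mem_univ, true_and]
      exact (hj' i).symm
    have step2 : colCount (B * A) ≤ colCount A := by
      unfold colCount
      set f : Finset (Fin d) → Finset (Fin d) := fun S =>
        if h : ∃ j : Fin d, (Finset.univ.filter fun i => A i j ≠ 0) = S then
          (Finset.univ.filter fun i => (B * A) i h.choose ≠ 0) else ∅ with hf
      apply Finset.card_le_card_of_surjOn f
      intro T hT
      simp only [Finset.coe_erase, Set.mem_diff, Finset.coe_image,
        Set.mem_image, Finset.mem_coe] at hT
      rcases hT with ⟨⟨j, _, hj⟩, hT0⟩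
      have hT0' : T ≠ ∅ := by simpa using hT0
      set S : Finset (Fin d) := Finset.univ.filter fun i => A i j ≠ 0 with hSdef
      have hSne : S ≠ ∅ := by
        intro h
        apply hT0'
        have hz : ∀ i, A i j = 0 := by
          intro i
          by_contra hi
          have : i ∈ S := by simp [hSdef, hi]
          simp [h] at this
        rw [← hj]
        ext i
        simp [partc j hz i]
      have hex : ∃ j' : Fin d, (Finset.univ.filter fun i => A i j' ≠ 0) = S := ⟨j, rfl⟩
      refine ⟨S, ?_, ?_⟩
      · simp only [Finset.coe_erase, Set.mem_diff, Finset.coe_image,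
          Set.mem_image, Finset.mem_coe]
        exact ⟨⟨j, Finset.mem_univ j, rfl⟩, by simpa using hSne⟩
      · rw [hf]
        simp only [hex, dif_pos]
        have hch : (Finset.univ.filter fun i => A i hex.choose ≠ 0) = S := hex.choose_spec
        have hiff : ∀ i, A i hex.choose ≠ 0 ↔ A i j ≠ 0 := by
          intro i
          have := Finset.ext_iff.1 hch i
          simp only [hSdef, Finset.mem_filter, Finset.mem_univ, true_and] at this
          exact this
        rw [← hj]
        ext i
        simp only [Finset.mem_filter, Finset.mem_univ, true_and]
        exact partb hex.choose j hiff i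
    exact step1.trans step2
  · -- (f)
    intro j0 j1
    by_cases h0 : ∀ i, (B * A * C) i j0 = 0
    · left; intro i hi; exact absurd (h0 i) hi
    by_cases h1 : ∀ i, (B * A * C) i j1 = 0
    · right; intro i hi; exact absurd (h1 i) hi
    push_neg at h0 h1
    obtain ⟨k0, hk0⟩ := partd j0 (colv_ne _ _ h0)
    obtain ⟨k1, hk1⟩ := partd j1 (colv_ne _ _ h1)
    rcases hBA1 k0 k1 with h | h
    · left; intro i hi; exact (hk1 i).2 (h i ((hk0 i).1 hi))
    · right; intro i hi; exact (hk0 i).2 (h i ((hk1 i).1 hi))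
end

section
/- Let (a_n) and (d_n) be sequences of positive real numbers and (b_n) a sequence of nonnegative real numbers, and let P_n be the 2×2 matrix product P_n := [[a_1, b_1],[0, d_1]]⋯[[a_n, b_n],[0, d_n]]. Define s := Σ_{n=1}^∞ (a_1⋯a_{n−1}·b_n)/(d_1⋯d_{n−1}·d_n) ∈ [0, +∞]. Then the normalized first column P_n U_1/‖P_n U_1‖ converges to (1,0)^T as n → +∞; and the normalized second column P_n U_2/‖P_n U_2‖ converges to (s/(s+1), 1/(s+1))^T if s < +∞, and to (1,0)^T if s = +∞. -/
open Matrix Filter Finset Topology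

/-- The 2×2 upper-triangular matrix `[[a n, b n],[0, e n]]`. -/
noncomputable def triMat (a b e : ℕ → ℝ) (n : ℕ) : Matrix (Fin 2) (Fin 2) ℝ :=
  !![a n, b n; 0, e n]

/-- The general term `(a_1⋯a_n · b_{n+1}) / (d_1⋯d_n · d_{n+1})` of the series `s`. -/
noncomputable def triSeries (a b e : ℕ → ℝ) (n : ℕ) : ℝ :=
  ((∏ k ∈ Finset.range n, a (k + 1)) * b (n + 1)) /
    ((∏ k ∈ Finset.range n, e (k + 1)) * e (n + 1))

/-
The product `P_n` is again upper triangular, with diagonal `α_n = a_1⋯a_n`, `δ_n = d_1⋯d_n`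
and upper-right entry `δ_n s_n`, where `s_n` is the `n`-th partial sum of the series `s`.
Hence the first column is a positive multiple of `U_1`, and the second one a positive multiple
of `(s_n, 1)ᵀ`, whose normalization `(s_n/(s_n+1), 1/(s_n+1))ᵀ` depends continuously on `s_n`
and tends to `(1,0)ᵀ` as `s_n → ∞`.
-/

lemma l1_smul {d : ℕ} (c : ℝ) (v : Fin d → ℝ) : l1 (c • v) = |c| * l1 v := by
  simp only [l1, Pi.smul_apply, smul_eq_mul, abs_mul, Finset.mul_sum]

lemma nrm_smul_of_pos {d : ℕ} {c : ℝ} (hc : 0 < c) (v : Fin d → ℝ) :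
    nrm (c • v) = nrm v := by
  rw [nrm, nrm, l1_smul, abs_of_pos hc, smul_smul, _root_.mul_inv_rev, mul_assoc,
    inv_mul_cancel₀ hc.ne', mul_one]

lemma nrm_vec_one_zero : nrm ![(1 : ℝ), 0] = ![1, 0] := by
  ext i; fin_cases i <;> simp [nrm, l1]

lemma nrm_vec_one {x : ℝ} (hx : 0 ≤ x) : nrm ![x, 1] = ![x / (x + 1), 1 / (x + 1)] := by
  ext i; fin_cases i <;> simp [nrm, l1, abs_of_nonneg hx, div_eq_inv_mul]

section Limits

variable {ι : Type*} {l : Filter ι} {S : ι → ℝ}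

lemma tendsto_vec_div_add_one {s : ℝ} (hs : 0 ≤ s) (hS : Tendsto S l (𝓝 s)) :
    Tendsto (fun n => ![S n / (S n + 1), 1 / (S n + 1)]) l (𝓝 ![s / (s + 1), 1 / (s + 1)]) := by
  have hs1 : s + 1 ≠ 0 := by positivity
  have hS1 : Tendsto (fun n => S n + 1) l (𝓝 (s + 1)) := hS.add_const 1
  have hfst : Tendsto (fun n => S n / (S n + 1)) l (𝓝 (s / (s + 1))) := hS.div hS1 hs1
  rw [tendsto_pi_nhds, Fin.forall_fin_two]
  exact ⟨by simpa using hfst, by simpa using hS1.inv₀ hs1⟩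

lemma tendsto_vec_div_add_one_atTop (hS : Tendsto S l atTop) :
    Tendsto (fun n => ![S n / (S n + 1), 1 / (S n + 1)]) l (𝓝 ![1, 0]) := by
  have hS1 : Tendsto (fun n => S n + 1) l atTop := tendsto_atTop_add_const_right _ 1 hS
  have hinv : Tendsto (fun n => (S n + 1)⁻¹) l (𝓝 0) := hS1.inv_tendsto_atTop
  have hfst : ∀ᶠ n in l, 1 - (S n + 1)⁻¹ = S n / (S n + 1) := by
    filter_upwards [hS.eventually_gt_atTop 0] with n hn
    field_simp
    ring
  rw [tendsto_pi_nhds, Fin.forall_fin_two]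
  exact ⟨by simpa using (tendsto_const_nhds.sub hinv).congr' hfst, by simpa using hinv⟩

end Limits

lemma blockProd_zero_succ {d : ℕ} (A : ℕ → Matrix (Fin d) (Fin d) ℝ) (n : ℕ) :
    blockProd A 0 (n + 1) = blockProd A 0 n * A (n + 1) := by
  simp [blockProd, List.range_succ, Nat.add_comm 1 n]

lemma prod_range_pos_of_pos {f : ℕ → ℝ} (hf : ∀ n, 1 ≤ n → 0 < f n) (n : ℕ) :
    0 < ∏ k ∈ range n, f (k + 1) :=
  Finset.prod_pos fun k _ => hf _ (Nat.le_add_left 1 k)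

section Triangular

variable {a b e : ℕ → ℝ}

lemma blockProd_triMat (he : ∀ n, 1 ≤ n → 0 < e n) (n : ℕ) :
    blockProd (triMat a b e) 0 n =
      !![∏ k ∈ range n, a (k + 1),
         (∏ k ∈ range n, e (k + 1)) * ∑ m ∈ range n, triSeries a b e m;
         0, ∏ k ∈ range n, e (k + 1)] := by
  induction n with
  | zero => simp [blockProd, Matrix.one_fin_two]
  | succ n ih =>
    have hpe : ∏ k ∈ range n, e (k + 1) ≠ 0 := (prod_range_pos_of_pos he n).ne'
    have he1 : e (n + 1) ≠ 0 := (he _ (Nat.le_add_left 1 n)).ne'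
    rw [blockProd_zero_succ, ih, triMat]
    ext i j
    fin_cases i <;> fin_cases j <;>
      simp [Matrix.mul_apply, Fin.sum_univ_two, Finset.prod_range_succ, Finset.sum_range_succ,
        triSeries]
    field_simp
    ring

lemma triSeries_nonneg (ha : ∀ n, 1 ≤ n → 0 < a n) (he : ∀ n, 1 ≤ n → 0 < e n)
    (hb : ∀ n, 1 ≤ n → 0 ≤ b n) (m : ℕ) : 0 ≤ triSeries a b e m :=
  div_nonneg (mul_nonneg (prod_range_pos_of_pos ha m).le (hb _ (Nat.le_add_left 1 m)))
    (mul_nonneg (prod_range_pos_of_pos he m).le (he _ (Nat.le_add_left 1 m)).le)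

lemma nrm_colv_zero_blockProd_triMat (ha : ∀ n, 1 ≤ n → 0 < a n)
    (he : ∀ n, 1 ≤ n → 0 < e n) (n : ℕ) :
    nrm (colv (blockProd (triMat a b e) 0 n) 0) = ![1, 0] := by
  have hcol :
      colv (blockProd (triMat a b e) 0 n) 0 = (∏ k ∈ range n, a (k + 1)) • ![1, 0] := by
    ext i; fin_cases i <;> simp [colv, blockProd_triMat he]
  rw [hcol, nrm_smul_of_pos (prod_range_pos_of_pos ha n), nrm_vec_one_zero]

lemma nrm_colv_one_blockProd_triMat (ha : ∀ n, 1 ≤ n → 0 < a n)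
    (he : ∀ n, 1 ≤ n → 0 < e n) (hb : ∀ n, 1 ≤ n → 0 ≤ b n) (n : ℕ) :
    nrm (colv (blockProd (triMat a b e) 0 n) 1) =
      ![(∑ m ∈ range n, triSeries a b e m) / ((∑ m ∈ range n, triSeries a b e m) + 1),
        1 / ((∑ m ∈ range n, triSeries a b e m) + 1)] := by
  have hcol : colv (blockProd (triMat a b e) 0 n) 1 =
      (∏ k ∈ range n, e (k + 1)) • ![∑ m ∈ range n, triSeries a b e m, 1] := by
    ext i; fin_cases i <;> simp [colv, blockProd_triMat he]
  rw [hcol, nrm_smul_of_pos (prod_range_pos_of_pos he n),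
    nrm_vec_one (Finset.sum_nonneg fun m _ => triSeries_nonneg ha he hb m)]

end Triangular

/-- **Example 2 (§ 4.2).** For products of 2×2 upper-triangular matrices with positive
diagonal and nonnegative upper-right entries, the normalized first column converges to
`(1,0)ᵀ`, and the normalized second column converges to `(s/(s+1), 1/(s+1))ᵀ` when
`s = Σ a_1⋯a_{n−1} b_n / (d_1⋯d_{n−1} d_n) < ∞`, and to `(1,0)ᵀ` when `s = ∞`. -/
theorem triangular_columns (a b e : ℕ → ℝ)
    (ha : ∀ n, 1 ≤ n → 0 < a n) (he : ∀ n, 1 ≤ n → 0 < e n)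
    (hb : ∀ n, 1 ≤ n → 0 ≤ b n) :
    Tendsto (fun n => nrm (colv (blockProd (triMat a b e) 0 n) 0)) atTop
      (nhds ![1, 0]) ∧
    (Summable (triSeries a b e) →
      Tendsto (fun n => nrm (colv (blockProd (triMat a b e) 0 n) 1)) atTop
        (nhds ![(∑' n, triSeries a b e n) / ((∑' n, triSeries a b e n) + 1),
                1 / ((∑' n, triSeries a b e n) + 1)])) ∧
    (¬ Summable (triSeries a b e) →
      Tendsto (fun n => nrm (colv (blockProd (triMat a b e) 0 n) 1)) atTop
        (nhds ![1, 0])) := by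
  have hnonneg := triSeries_nonneg ha he hb
  simp only [nrm_colv_zero_blockProd_triMat ha he, nrm_colv_one_blockProd_triMat ha he hb]
  refine ⟨tendsto_const_nhds, fun hsum => ?_, fun hdiv => ?_⟩
  · exact tendsto_vec_div_add_one (tsum_nonneg hnonneg) hsum.hasSum.tendsto_sum_nat
  · exact tendsto_vec_div_add_one_atTop
      ((not_summable_iff_tendsto_nat_atTop_of_nonneg hnonneg).mp hdiv)
end

section
/- Let (A_1, A_2, …) be a sequence of d×d complex matrices such that P_n := A_1⋯A_n is nonzero for every n and P_n/‖P_n‖ converges to a matrix P as n → +∞ (where ‖M‖ := Σ_{i,j}|M(i,j)|). Then there exists a nonzero row vector L ∈ ℂ^{1×d} such that, for every d×d complex matrix A occurring infinitely many times in the sequence (i.e. with {n : A_n = A} infinite), L·A = ‖P·A‖·L; in other words, all matrices occurring infinitely many times in the sequence have a common left eigenvector. -/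
/-!
Write `Q n = P_n / ‖P_n‖`. If `A (n+1) = M`, then `Q (n+1)` is the normalization of
`Q n * M`. Normalization is continuous away from `0`, so along the infinitely many such `n`
the limit `P` is a fixed point of `X ↦ X M / ‖X M‖` whenever `P M ≠ 0`; hence
`P M = ‖P M‖ P` in every case, and any nonzero row of `P` (which has norm `1`) is a common
left eigenvector.
-/

open Matrix Filter Finset Topology

/-- `blockProdC A m n = A (m+1) * ⋯ * A n` for complex matrices. -/
noncomputable def blockProdC {d : ℕ} (A : ℕ → Matrix (Fin d) (Fin d) ℂ) (m n : ℕ) :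
    Matrix (Fin d) (Fin d) ℂ :=
  ((List.range (n - m)).map fun i => A (m + 1 + i)).prod

/-- `‖M‖` : sum of the absolute values of the entries of a complex matrix. -/
noncomputable def matNormC {d : ℕ} (M : Matrix (Fin d) (Fin d) ℂ) : ℝ :=
  ∑ i, ∑ j, ‖M i j‖

theorem apply_eq_of_tendsto_of_frequently_succ_eq {X : Type*} [TopologicalSpace X] [T2Space X]
    {x : ℕ → X} {p : X} {f : X → X} (hx : Tendsto x atTop (𝓝 p)) (hf : ContinuousAt f p)
    (hfreq : ∃ᶠ n in atTop, x (n + 1) = f (x n)) : f p = p :=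
  (tendsto_nhds_unique_of_frequently_eq ((tendsto_add_atTop_iff_nat 1).2 hx)
    (hf.tendsto.comp hx) hfreq).symm

section MatNormC

variable {d : ℕ}

theorem matNormC_nonneg (M : Matrix (Fin d) (Fin d) ℂ) : 0 ≤ matNormC M := by
  unfold matNormC
  positivity

theorem matNormC_eq_zero_iff {M : Matrix (Fin d) (Fin d) ℂ} : matNormC M = 0 ↔ M = 0 := by
  simp [matNormC, Finset.sum_eq_zero_iff_of_nonneg, Finset.sum_nonneg, ← Matrix.ext_iff]

theorem matNormC_pos {M : Matrix (Fin d) (Fin d) ℂ} (hM : M ≠ 0) : 0 < matNormC M :=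
  (matNormC_nonneg M).lt_of_ne (Ne.symm (mt matNormC_eq_zero_iff.1 hM))

theorem matNormC_smul (r : ℝ) (M : Matrix (Fin d) (Fin d) ℂ) :
    matNormC (r • M) = |r| * matNormC M := by
  simp [matNormC, Complex.real_smul, Finset.mul_sum]

theorem continuous_matNormC : Continuous (matNormC (d := d)) := by
  unfold matNormC
  fun_prop

noncomputable def normalizeC (M : Matrix (Fin d) (Fin d) ℂ) : Matrix (Fin d) (Fin d) ℂ :=
  (matNormC M)⁻¹ • M

theorem matNormC_normalizeC {M : Matrix (Fin d) (Fin d) ℂ} (hM : M ≠ 0) :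
    matNormC (normalizeC M) = 1 := by
  have hpos := matNormC_pos hM
  rw [normalizeC, matNormC_smul, abs_of_pos (inv_pos.2 hpos), inv_mul_cancel₀ hpos.ne']

theorem matNormC_smul_normalizeC (M : Matrix (Fin d) (Fin d) ℂ) :
    matNormC M • normalizeC M = M := by
  rcases eq_or_ne M 0 with rfl | hM
  · simp [normalizeC]
  · rw [normalizeC, smul_smul, mul_inv_cancel₀ (matNormC_pos hM).ne', one_smul]

theorem normalizeC_smul_of_pos {c : ℝ} (hc : 0 < c) (M : Matrix (Fin d) (Fin d) ℂ) :
    normalizeC (c • M) = normalizeC M := by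
  rcases eq_or_ne M 0 with rfl | hM
  · simp
  · rw [normalizeC, normalizeC, matNormC_smul, abs_of_pos hc, smul_smul]
    congr 1
    field_simp

theorem continuousAt_normalizeC {M : Matrix (Fin d) (Fin d) ℂ} (hM : M ≠ 0) :
    ContinuousAt normalizeC M :=
  (continuous_matNormC.continuousAt.inv₀ (matNormC_pos hM).ne').smul continuousAt_id

theorem ne_zero_of_tendsto_normalizeC {ι : Type*} {l : Filter ι} [l.NeBot]
    {X : ι → Matrix (Fin d) (Fin d) ℂ} {P : Matrix (Fin d) (Fin d) ℂ}
    (hX : ∀ᶠ n in l, X n ≠ 0)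
    (hP : Tendsto (fun n => normalizeC (X n)) l (𝓝 P)) : P ≠ 0 := by
  have hnorm : matNormC P = 1 :=
    tendsto_nhds_unique ((continuous_matNormC.tendsto P).comp hP)
      (tendsto_const_nhds.congr' (hX.mono fun _ hn => (matNormC_normalizeC hn).symm))
  rintro rfl
  simp [matNormC] at hnorm

theorem mul_eq_matNormC_smul_of_frequently {Q : ℕ → Matrix (Fin d) (Fin d) ℂ}
    {P M : Matrix (Fin d) (Fin d) ℂ} (hQ : Tendsto Q atTop (𝓝 P))
    (hfreq : ∃ᶠ n in atTop, Q (n + 1) = normalizeC (Q n * M)) :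
    P * M = matNormC (P * M) • P := by
  rcases eq_or_ne (P * M) 0 with hPM | hPM
  · rw [hPM, matNormC_eq_zero_iff.2 rfl, zero_smul]
  · have hfix : normalizeC (P * M) = P :=
      apply_eq_of_tendsto_of_frequently_succ_eq (f := fun X => normalizeC (X * M)) hQ
        ((continuousAt_normalizeC hPM).comp (f := fun X => X * M)
          (continuous_id.matrix_mul continuous_const).continuousAt)
        hfreq
    conv_lhs => rw [← matNormC_smul_normalizeC (P * M), hfix]

end MatNormC

section BlockProdC

variable {d : ℕ} (A : ℕ → Matrix (Fin d) (Fin d) ℂ)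

theorem blockProdC_zero_succ (n : ℕ) :
    blockProdC A 0 (n + 1) = blockProdC A 0 n * A (n + 1) := by
  simp [blockProdC, List.range_succ, Nat.add_comm]

theorem normalizeC_blockProdC_zero_succ {n : ℕ} (hn : blockProdC A 0 n ≠ 0) :
    normalizeC (blockProdC A 0 (n + 1)) =
      normalizeC (normalizeC (blockProdC A 0 n) * A (n + 1)) := by
  have hscaled : normalizeC (blockProdC A 0 n) * A (n + 1) =
      (matNormC (blockProdC A 0 n))⁻¹ • blockProdC A 0 (n + 1) := by
    rw [blockProdC_zero_succ, normalizeC, Matrix.smul_mul]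
  rw [hscaled, normalizeC_smul_of_pos (inv_pos.2 (matNormC_pos hn))]

theorem frequently_normalizeC_blockProdC_succ (hA : ∀ n, 1 ≤ n → blockProdC A 0 n ≠ 0)
    {M : Matrix (Fin d) (Fin d) ℂ} (hM : {n : ℕ | 1 ≤ n ∧ A n = M}.Infinite) :
    ∃ᶠ n in atTop, normalizeC (blockProdC A 0 (n + 1)) =
      normalizeC (normalizeC (blockProdC A 0 n) * M) := by
  rw [frequently_atTop]
  intro a
  obtain ⟨n, ⟨hn, hAn⟩, hna⟩ := hM.exists_gt (a + 1)
  obtain ⟨k, rfl⟩ := Nat.exists_eq_add_of_le' (show 1 ≤ n by omega)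
  refine ⟨k, by omega, ?_⟩
  rw [← hAn, normalizeC_blockProdC_zero_succ A (hA k (by omega))]

end BlockProdC

/-- **Proposition 5.3.** If `P n / ‖P n‖` converges to `P`, then all the matrices
occurring infinitely many times in the sequence have a common left eigenvector: there
is a nonzero row vector `L` with `L · A = ‖P·A‖ · L` for each such `A`. -/
theorem common_left_eigenvector {d : ℕ} (A : ℕ → Matrix (Fin d) (Fin d) ℂ)
    (hP : ∀ n, 1 ≤ n → blockProdC A 0 n ≠ 0)
    (P : Matrix (Fin d) (Fin d) ℂ)
    (hconv : Tendsto (fun n => (matNormC (blockProdC A 0 n))⁻¹ • blockProdC A 0 n)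
      atTop (nhds P)) :
    ∃ L : Fin d → ℂ, L ≠ 0 ∧
      ∀ M : Matrix (Fin d) (Fin d) ℂ, {n : ℕ | 1 ≤ n ∧ A n = M}.Infinite →
        L ᵥ* M = matNormC (P * M) • L := by
  have hP0 : P ≠ 0 :=
    ne_zero_of_tendsto_normalizeC (eventually_ge_atTop 1 |>.mono hP) hconv
  obtain ⟨i, hi⟩ := Function.ne_iff.1 hP0
  refine ⟨P i, hi, fun M hM => ?_⟩
  have hPM := mul_eq_matNormC_smul_of_frequently hconv
    (frequently_normalizeC_blockProdC_succ A hP hM)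
  rw [← mul_apply_eq_vecMul]
  exact congrFun hPM i
end

section
/- Let Ω := {0,…,a}^ℕ (with a ≥ 1), σ the shift map, and μ a Borel probability measure on Ω with μ[w] > 0 for every finite word w. Define the n-step potentials φ_n : Ω → ℝ by φ_1(ω) := log μ[ω_1] and φ_n(ω) := log( μ[ω_1⋯ω_n] / μ[ω_2⋯ω_n] ) for n ≥ 2, and suppose φ_n converges uniformly on Ω to a function φ. Then, setting K_n := exp( Σ_{k=1}^n ‖φ − φ_k‖_∞ ), one has for every ω ∈ Ω and every n ≥ 1: K_n^{-1} ≤ μ[ω_1⋯ω_n] / exp( Σ_{k=0}^{n−1} φ(σ^k·ω) ) ≤ K_n; moreover (1/n)·log K_n → 0 as n → +∞, so that μ is a weak Gibbs measure for φ. -/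
open Filter Finset Topology MeasureTheory

/-- The cylinder set `[ω_1 ⋯ ω_n]` of sequences agreeing with `ω` on the first `n`
letters. -/
def cylSet {α : Type*} (ω : ℕ → α) (n : ℕ) : Set (ℕ → α) := {ξ | ∀ k < n, ξ k = ω k}

/-- `μ[ω_1 ⋯ ω_n]` as a real number. -/
noncomputable def cylMeas {α : Type*} [MeasurableSpace α] (μ : Measure (ℕ → α))
    (ω : ℕ → α) (n : ℕ) : ℝ := (μ (cylSet ω n)).toReal

/-- The `n`-step potential `φ_n(ω) = log (μ[ω_1⋯ω_n] / μ[ω_2⋯ω_n])` associated with a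
measure `μ` (for `n = 1`, `φ_1(ω) = log μ[ω_1]`). -/
noncomputable def stepPotential {α : Type*} [MeasurableSpace α] (μ : Measure (ℕ → α))
    (n : ℕ) (ω : ℕ → α) : ℝ :=
  Real.log (cylMeas μ ω n / cylMeas μ (fun k => ω (k + 1)) (n - 1))

/-!
Since the empty cylinder has measure `1`, `log μ[ω_1⋯ω_n]` telescopes into `Σ_{k<n} φ_{n-k}(σ^k ω)`, so its distance
to the Birkhoff sum `Σ_{k<n} φ(σ^k ω)` is at most `Σ_{k=1}^n ‖φ - φ_k‖_∞ = log K_n`. Each `φ_k`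
depends on finitely many letters of a finite alphabet, hence is bounded, and so is its uniform
limit `φ`; this makes the suprema honest sup norms. They tend to `0`, hence so do their Cesàro
means `(1/n) log K_n`.
-/

lemma DependsOn.finite_range {ι α β : Type*} [Finite α] {f : (ι → α) → β}
    {s : Set ι} (hs : s.Finite) (hf : DependsOn f s) : (Set.range f).Finite := by
  rcases isEmpty_or_nonempty β with _ | _
  · exact Set.toFinite _
  obtain ⟨g, rfl⟩ := dependsOn_iff_exists_comp.mp hf
  have := hs.to_subtype
  exact (Set.finite_range g).subset (Set.range_comp_subset_range _ _)

lemma TendstoUniformly.bddAbove_range_abs {ι X : Type*} {l : Filter ι} [l.NeBot]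
    {F : ι → X → ℝ} {f : X → ℝ} (hF : TendstoUniformly F f l)
    (hbdd : ∀ i, BddAbove (Set.range fun x => |F i x|)) :
    BddAbove (Set.range fun x => |f x|) := by
  obtain ⟨i, hi⟩ := (Metric.tendstoUniformly_iff.mp hF 1 one_pos).exists
  obtain ⟨C, hC⟩ := hbdd i
  refine ⟨C + 1, ?_⟩
  rintro _ ⟨x, rfl⟩
  have hFx : |F i x| ≤ C := hC ⟨x, rfl⟩
  have hfx : |f x - F i x| < 1 := by simpa [Real.dist_eq] using hi x
  linarith [abs_sub_abs_le_abs_sub (f x) (F i x)]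

lemma bddAbove_range_abs_sub {X : Type*} {f g : X → ℝ}
    (hf : BddAbove (Set.range fun x => |f x|)) (hg : BddAbove (Set.range fun x => |g x|)) :
    BddAbove (Set.range fun x => |f x - g x|) := by
  obtain ⟨C, hC⟩ := hf
  obtain ⟨D, hD⟩ := hg
  refine ⟨C + D, ?_⟩
  rintro _ ⟨x, rfl⟩
  exact (abs_sub _ _).trans (add_le_add (hC ⟨x, rfl⟩) (hD ⟨x, rfl⟩))

lemma TendstoUniformly.tendsto_iSup_abs_sub {ι X : Type*} {l : Filter ι}
    {F : ι → X → ℝ} {f : X → ℝ} (hF : TendstoUniformly F f l) :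
    Tendsto (fun i => ⨆ x, |f x - F i x|) l (𝓝 0) := by
  rw [Metric.tendsto_nhds]
  intro ε hε
  filter_upwards [Metric.tendstoUniformly_iff.mp hF (ε / 2) (half_pos hε)] with i hi
  have hsup : ⨆ x, |f x - F i x| ≤ ε / 2 :=
    Real.iSup_le (fun x => by simpa [Real.dist_eq] using (hi x).le) (half_pos hε).le
  rw [Real.dist_eq, sub_zero, abs_of_nonneg (Real.iSup_nonneg fun x => abs_nonneg _)]
  linarith

lemma sum_Icc_one_eq_sum_range {M : Type*} [AddCommMonoid M] (g : ℕ → M) (n : ℕ) :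
    ∑ k ∈ Icc 1 n, g k = ∑ k ∈ range n, g (k + 1) := by
  rw [← Finset.Ico_add_one_right_eq_Icc, sum_Ico_eq_sum_range, Nat.add_sub_cancel]
  simp only [add_comm]

lemma sum_range_sub_eq_sum_Icc {M : Type*} [AddCommMonoid M] (g : ℕ → M) (n : ℕ) :
    ∑ k ∈ range n, g (n - k) = ∑ k ∈ Icc 1 n, g k := by
  rw [sum_Icc_one_eq_sum_range, ← sum_range_reflect]
  refine sum_congr rfl fun k hk => ?_
  rw [mem_range] at hk
  congr 1
  omega

lemma div_exp_bounds_of_abs_log_sub_le {x s S : ℝ} (hx : 0 < x) (h : |Real.log x - s| ≤ S) :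
    (Real.exp S)⁻¹ ≤ x / Real.exp s ∧ x / Real.exp s ≤ Real.exp S := by
  rw [← Real.exp_neg, ← Real.exp_log hx, ← Real.exp_sub, Real.exp_le_exp, Real.exp_le_exp]
  exact abs_le.mp h

section Cylinder

variable {α : Type*}

lemma cylSet_congr {ω ω' : ℕ → α} {n : ℕ} (h : ∀ k < n, ω k = ω' k) :
    cylSet ω n = cylSet ω' n := by
  ext ξ
  exact ⟨fun hξ k hk => (hξ k hk).trans (h k hk), fun hξ k hk => (hξ k hk).trans (h k hk).symm⟩

lemma cylSet_zero (ω : ℕ → α) : cylSet ω 0 = Set.univ := by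
  ext ξ
  simp [cylSet]

variable [MeasurableSpace α] (μ : Measure (ℕ → α))

lemma cylMeas_congr {ω ω' : ℕ → α} {n : ℕ} (h : ∀ k < n, ω k = ω' k) :
    cylMeas μ ω n = cylMeas μ ω' n := by
  rw [cylMeas, cylSet_congr h, cylMeas]

lemma cylMeas_zero [IsProbabilityMeasure μ] (ω : ℕ → α) : cylMeas μ ω 0 = 1 := by
  simp [cylMeas, cylSet_zero]

lemma stepPotential_dependsOn (n : ℕ) : DependsOn (stepPotential μ n) (Set.Iio n) := by
  intro ξ ξ' h
  rw [stepPotential, stepPotential, cylMeas_congr μ h,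
    cylMeas_congr μ fun k hk => h (k + 1) (by simp only [Set.mem_Iio]; omega)]

lemma log_cylMeas_eq_sum_stepPotential [IsProbabilityMeasure μ]
    (hpos : ∀ ω n, 0 < cylMeas μ ω n) (n : ℕ) (ω : ℕ → α) :
    Real.log (cylMeas μ ω n) =
      ∑ k ∈ range n, stepPotential μ (n - k) (fun i => ω (i + k)) := by
  induction n generalizing ω with
  | zero => simp [cylMeas_zero]
  | succ n ih =>
    have hfirst : stepPotential μ (n + 1) ω =
        Real.log (cylMeas μ ω (n + 1)) - Real.log (cylMeas μ (fun i => ω (i + 1)) n) :=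
      Real.log_div (hpos ω (n + 1)).ne' (hpos _ n).ne'
    rw [sum_range_succ', Nat.sub_zero, ← add_eq_of_eq_sub' hfirst, ih]
    simp only [Nat.add_sub_add_right, add_assoc, add_zero]

lemma abs_log_cylMeas_sub_sum_le [IsProbabilityMeasure μ] (hpos : ∀ ω n, 0 < cylMeas μ ω n)
    {φ : (ℕ → α) → ℝ} (hbdd : ∀ k, BddAbove (Set.range fun ξ => |φ ξ - stepPotential μ k ξ|))
    (ω : ℕ → α) (n : ℕ) :
    |Real.log (cylMeas μ ω n) - ∑ k ∈ range n, φ fun i => ω (i + k)| ≤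
      ∑ k ∈ Icc 1 n, ⨆ ξ, |φ ξ - stepPotential μ k ξ| := by
  rw [log_cylMeas_eq_sum_stepPotential μ hpos, ← sum_sub_distrib,
    ← sum_range_sub_eq_sum_Icc fun k => ⨆ ξ, |φ ξ - stepPotential μ k ξ|]
  refine (abs_sum_le_sum_abs _ _).trans (sum_le_sum fun k _ => ?_)
  rw [abs_sub_comm]
  exact le_ciSup (hbdd (n - k)) _

end Cylinder

theorem weakGibbs_of_uniform_potential_general (a : ℕ)
    (μ : Measure (ℕ → Fin (a + 1))) [IsProbabilityMeasure μ]
    (hfull : ∀ (ω : ℕ → Fin (a + 1)) (n : ℕ), 0 < cylMeas μ ω n)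
    (φ : (ℕ → Fin (a + 1)) → ℝ)
    (hunif : TendstoUniformly (fun n => stepPotential μ (n + 1)) φ atTop) :
    (∀ (ω : ℕ → Fin (a + 1)) (n : ℕ), 1 ≤ n →
      (Real.exp (∑ k ∈ Finset.Icc 1 n, ⨆ ξ, |φ ξ - stepPotential μ k ξ|))⁻¹ ≤
        cylMeas μ ω n / Real.exp (∑ k ∈ Finset.range n, φ fun i => ω (i + k)) ∧
      cylMeas μ ω n / Real.exp (∑ k ∈ Finset.range n, φ fun i => ω (i + k)) ≤
        Real.exp (∑ k ∈ Finset.Icc 1 n, ⨆ ξ, |φ ξ - stepPotential μ k ξ|)) ∧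
    Tendsto (fun n : ℕ =>
        (1 / (n : ℝ)) *
          Real.log (Real.exp (∑ k ∈ Finset.Icc 1 n, ⨆ ξ, |φ ξ - stepPotential μ k ξ|)))
      atTop (nhds 0) := by
  have hstep : ∀ k, BddAbove (Set.range fun ξ => |stepPotential μ k ξ|) := fun k =>
    (DependsOn.finite_range (Set.finite_Iio k)
      fun _ _ h => congrArg abs (stepPotential_dependsOn μ k h)).bddAbove
  have hbdd : ∀ k, BddAbove (Set.range fun ξ => |φ ξ - stepPotential μ k ξ|) := fun k =>
    bddAbove_range_abs_sub (hunif.bddAbove_range_abs fun n => hstep (n + 1)) (hstep k)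
  refine ⟨fun ω n _ => div_exp_bounds_of_abs_log_sub_le (hfull ω n)
    (abs_log_cylMeas_sub_sum_le μ hfull hbdd ω n), ?_⟩
  simp only [Real.log_exp, one_div, sum_Icc_one_eq_sum_range]
  exact hunif.tendsto_iSup_abs_sub.cesaro

/-- **Proposition 6.1.** If the `n`-step potentials of a fully supported Borel
probability measure `μ` on `{0,…,a}^ℕ` converge uniformly to `φ`, then `μ` is a weak
Gibbs measure for `φ`, with constants `K n = exp (Σ_{k=1}^n ‖φ − φ_k‖_∞)` satisfying
`(1/n) log K n → 0`. -/
theorem weakGibbs_of_uniform_potential (a : ℕ) (ha : 1 ≤ a)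
    (μ : Measure (ℕ → Fin (a + 1))) [IsProbabilityMeasure μ]
    (hfull : ∀ (ω : ℕ → Fin (a + 1)) (n : ℕ), 0 < cylMeas μ ω n)
    (φ : (ℕ → Fin (a + 1)) → ℝ)
    (hunif : TendstoUniformly (fun n => stepPotential μ (n + 1)) φ atTop) :
    (∀ (ω : ℕ → Fin (a + 1)) (n : ℕ), 1 ≤ n →
      (Real.exp (∑ k ∈ Finset.Icc 1 n, ⨆ ξ, |φ ξ - stepPotential μ k ξ|))⁻¹ ≤
        cylMeas μ ω n / Real.exp (∑ k ∈ Finset.range n, φ fun i => ω (i + k)) ∧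
      cylMeas μ ω n / Real.exp (∑ k ∈ Finset.range n, φ fun i => ω (i + k)) ≤
        Real.exp (∑ k ∈ Finset.Icc 1 n, ⨆ ξ, |φ ξ - stepPotential μ k ξ|)) ∧
    Tendsto (fun n : ℕ =>
        (1 / (n : ℝ)) *
          Real.log (Real.exp (∑ k ∈ Finset.Icc 1 n, ⨆ ξ, |φ ξ - stepPotential μ k ξ|)))
      atTop (nhds 0) :=
  weakGibbs_of_uniform_potential_general a μ hfull φ hunif
end
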